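/- arXiv:1010.1347 — 8 statements merged into one kernel-verified Lean document; each statement's English description precedes it below -/
import Mathlib

section
/- Let M be a simple weight module over sl(2,ℂ) (i.e., M is a simple module that decomposes into finite-dimensional weight spaces for the Cartan subalgebra ℂH). Then every weight space of M is at most one-dimensional, i.e., deg(M) = 1. -/
/-- Every simple weight module over `sl(2,ℂ)` has degree one, i.e. all of
its `H`-weight spaces are at most one-dimensional.  The module is presented through the
three endomorphisms `H, E, F` of a complex vector space `M` satisfying the `sl₂`-relations
(the bracket on `Module.End ℂ M` is the commutator); `M` is `H`-diagonalizable with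
finite-dimensional weight spaces, and has no nontrivial invariant subspace. -/
theorem stmt_0
    (M : Type*) [AddCommGroup M] [Module ℂ M] [Nontrivial M]
    (H E F : Module.End ℂ M)
    (hHE : ⁅H, E⁆ = (2 : ℂ) • E)
    (hHF : ⁅H, F⁆ = (-2 : ℂ) • F)
    (hEF : ⁅E, F⁆ = H)
    (hdiag : (⨆ μ : ℂ, H.eigenspace μ) = ⊤)
    (hfd : ∀ μ : ℂ, FiniteDimensional ℂ (H.eigenspace μ))
    (hsimple : ∀ p : Submodule ℂ M,
      (∀ m ∈ p, H m ∈ p ∧ E m ∈ p ∧ F m ∈ p) → p = ⊥ ∨ p = ⊤) :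
    ∀ μ : ℂ, Module.finrank ℂ (H.eigenspace μ) ≤ 1 := by
  classical
  rw [Ring.lie_def] at hHE hHF hEF
  have he : H * E = E * H + (2:ℂ) • E := by rw [← hHE]; abel
  have hf : H * F = F * H + (-2:ℂ) • F := by rw [← hHF]; abel
  have hef : E * F = F * E + H := by rw [← hEF]; abel
  set Ω : Module.End ℂ M := H*H + (2:ℂ) • H + (4:ℂ) • (F*E) with hΩ
  have heP : ∀ x : Module.End ℂ M, H * (E * x) = E * (H * x) + (2:ℂ) • (E * x) := by
    intro x; rw [← mul_assoc, he, add_mul, smul_mul_assoc, mul_assoc]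
  have hfP : ∀ x : Module.End ℂ M, H * (F * x) = F * (H * x) + (-2:ℂ) • (F * x) := by
    intro x; rw [← mul_assoc, hf, add_mul, smul_mul_assoc, mul_assoc]
  have hefP : ∀ x : Module.End ℂ M, E * (F * x) = F * (E * x) + H * x := by
    intro x; rw [← mul_assoc, hef, add_mul, mul_assoc]
  have hΩE : Ω * E = E * Ω := by
    simp only [hΩ, add_mul, mul_add, smul_mul_assoc, mul_smul_comm, smul_add, mul_assoc,
      heP, he, hefP, hef]
    module
  have hΩF : Ω * F = F * Ω := by
    simp only [hΩ, add_mul, mul_add, smul_mul_assoc, mul_smul_comm, smul_add, mul_assoc,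
      hfP, hf, hefP, hef]
    module
  have hΩH : Ω * H = H * Ω := by
    simp only [hΩ, add_mul, mul_add, smul_mul_assoc, mul_smul_comm, smul_add, mul_assoc,
      heP, he, hfP, hf]
    module
  -- pointwise weight-shift lemmas
  have hEmap : ∀ (ν : ℂ) (m : M), H m = ν • m → H (E m) = (ν + 2) • (E m) := by
    intro ν m hm
    have h1 := DFunLike.congr_fun he m
    simp only [Module.End.mul_apply, LinearMap.add_apply, LinearMap.smul_apply] at h1
    rw [h1, hm, map_smul, add_smul]
  have hFmap : ∀ (ν : ℂ) (m : M), H m = ν • m → H (F m) = (ν - 2) • (F m) := by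
    intro ν m hm
    have h1 := DFunLike.congr_fun hf m
    simp only [Module.End.mul_apply, LinearMap.add_apply, LinearMap.smul_apply] at h1
    rw [h1, hm, map_smul, sub_smul]
    module
  -- Ω preserves eigenspaces
  have hΩmem : ∀ (ν : ℂ) (m : M), m ∈ H.eigenspace ν → Ω m ∈ H.eigenspace ν := by
    intro ν m hm
    rw [Module.End.mem_eigenspace_iff] at hm ⊢
    have h1 := DFunLike.congr_fun hΩH m
    simp only [Module.End.mul_apply] at h1
    rw [← h1, hm, map_smul]
  -- find the Casimir eigenvalue
  obtain ⟨μ₀, hμ₀⟩ : ∃ μ₀ : ℂ, H.eigenspace μ₀ ≠ ⊥ := by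
    by_contra hcon
    push_neg at hcon
    have : (⨆ μ : ℂ, H.eigenspace μ) = ⊥ := by simp [hcon]
    rw [hdiag] at this
    exact top_ne_bot this
  haveI := hfd μ₀
  haveI : Nontrivial (H.eigenspace μ₀) := Submodule.nontrivial_iff_ne_bot.mpr hμ₀
  obtain ⟨c, hc⟩ := Module.End.exists_eigenvalue
    (Ω.restrict (fun m hm => hΩmem μ₀ m hm))
  obtain ⟨x, hx⟩ := hc.exists_hasEigenvector
  have hxval : Ω (x : M) = c • (x : M) := by
    have := hx.apply_eq_smul
    have h2 := congrArg (Submodule.subtype _) this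
    simpa [LinearMap.restrict_apply] using h2
  -- Ω acts as the scalar c on all of M
  have hcas : ∀ m : M, Ω m = c • m := by
    set p : Submodule ℂ M := LinearMap.ker (Ω - c • (1 : Module.End ℂ M)) with hp
    have hmemp : ∀ m : M, m ∈ p ↔ Ω m = c • m := by
      intro m
      simp [hp, LinearMap.mem_ker, sub_eq_zero]
    have hinv : ∀ m ∈ p, H m ∈ p ∧ E m ∈ p ∧ F m ∈ p := by
      intro m hm
      rw [hmemp] at hm
      refine ⟨?_, ?_, ?_⟩ <;> rw [hmemp]
      · have h1 := DFunLike.congr_fun hΩH m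
        simp only [Module.End.mul_apply] at h1
        rw [h1, hm, map_smul]
      · have h1 := DFunLike.congr_fun hΩE m
        simp only [Module.End.mul_apply] at h1
        rw [h1, hm, map_smul]
      · have h1 := DFunLike.congr_fun hΩF m
        simp only [Module.End.mul_apply] at h1
        rw [h1, hm, map_smul]
    rcases hsimple p hinv with hbot | htop
    · exfalso
      have hxp : (x : M) ∈ p := (hmemp _).mpr hxval
      rw [hbot] at hxp
      simp only [Submodule.mem_bot] at hxp
      exact hx.2 (by exact_mod_cast Subtype.coe_injective (by simpa using hxp))
    · intro m
      exact (hmemp m).mp (htop ▸ Submodule.mem_top)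
  -- scalar action of F∘E and E∘F on weight vectors
  have hFE : ∀ (ν : ℂ) (m : M), H m = ν • m →
      F (E m) = ((4:ℂ)⁻¹ * (c - ν^2 - 2*ν)) • m := by
    intro ν m hm
    have hcm := hcas m
    have hexp : Ω m = H (H m) + (2:ℂ) • H m + (4:ℂ) • F (E m) := by
      simp [hΩ, Module.End.mul_apply]
    rw [hexp, hm, map_smul, hm] at hcm
    have h4 : (4:ℂ) • F (E m) = c • m - (ν * ν) • m - (2*ν) • m := by
      rw [eq_sub_iff_add_eq, eq_sub_iff_add_eq]
      calc (4:ℂ) • F (E m) + (2*ν) • m + (ν*ν) • m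
          = ν • ν • m + (2:ℂ) • ν • m + (4:ℂ) • F (E m) := by module
        _ = c • m := hcm
    have h4' := congrArg (fun z => (4:ℂ)⁻¹ • z) h4
    simp only [smul_smul, smul_sub] at h4'
    norm_num at h4'
    rw [h4']
    module
  have hEF' : ∀ (ν : ℂ) (m : M), H m = ν • m →
      E (F m) = ((4:ℂ)⁻¹ * (c - ν^2 - 2*ν) + ν) • m := by
    intro ν m hm
    have h1 := DFunLike.congr_fun hef m
    simp only [Module.End.mul_apply, LinearMap.add_apply] at h1
    rw [h1, hFE ν m hm, hm, add_smul]
  -- main argument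
  intro μ
  rcases eq_or_ne (H.eigenspace μ) ⊥ with hbot | hne
  · rw [hbot]
    simp
  obtain ⟨v, hvmem, hvne⟩ := Submodule.ne_bot_iff _ |>.mp hne
  rw [Module.End.mem_eigenspace_iff] at hvmem
  set g : ℕ → M := fun n => (E ^ n) v with hgdef
  set k : ℕ → M := fun n => (F ^ n) v with hkdef
  have hgsucc : ∀ n, g (n + 1) = E (g n) := by
    intro n; simp only [hgdef, pow_succ', Module.End.mul_apply]
  have hksucc : ∀ n, k (n + 1) = F (k n) := by
    intro n; simp only [hkdef, pow_succ', Module.End.mul_apply]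
  have hg0 : g 0 = v := by simp [hgdef]
  have hk0 : k 0 = v := by simp [hkdef]
  have hg : ∀ n : ℕ, H (g n) = (μ + 2 * n) • g n := by
    intro n
    induction n with
    | zero => simpa [hg0] using hvmem
    | succ n ih =>
      rw [hgsucc n, hEmap _ _ ih]
      congr 1
      push_cast
      ring
  have hk : ∀ n : ℕ, H (k n) = (μ - 2 * n) • k n := by
    intro n
    induction n with
    | zero => simpa [hk0] using hvmem
    | succ n ih =>
      rw [hksucc n, hFmap _ _ ih]
      congr 1
      push_cast
      ring
  set S : Set M := Set.range g ∪ Set.range k with hSdef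
  set W : Submodule ℂ M := Submodule.span ℂ S with hWdef
  have hvW : v ∈ W := Submodule.subset_span (Or.inl ⟨0, hg0⟩)
  have hSW : S ⊆ W := Submodule.subset_span
  have hWE : ∀ m ∈ W, E m ∈ W := by
    intro m hm
    induction hm using Submodule.span_induction with
    | mem s hs =>
      rcases hs with ⟨n, rfl⟩ | ⟨n, rfl⟩
      · exact hSW (Or.inl ⟨n + 1, hgsucc n⟩)
      · cases n with
        | zero =>
          rw [hk0, ← hg0, ← hgsucc 0]
          exact hSW (Or.inl ⟨1, rfl⟩)
        | succ n =>
          rw [hksucc n, hEF' _ _ (hk n)]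
          exact Submodule.smul_mem _ _ (hSW (Or.inr ⟨n, rfl⟩))
    | zero => simp
    | add a b _ _ ha hb => rw [map_add]; exact Submodule.add_mem _ ha hb
    | smul a m _ hm => rw [map_smul]; exact Submodule.smul_mem _ _ hm
  have hWF : ∀ m ∈ W, F m ∈ W := by
    intro m hm
    induction hm using Submodule.span_induction with
    | mem s hs =>
      rcases hs with ⟨n, rfl⟩ | ⟨n, rfl⟩
      · cases n with
        | zero =>
          rw [hg0, ← hk0, ← hksucc 0]
          exact hSW (Or.inr ⟨1, rfl⟩)
        | succ n =>
          rw [hgsucc n, hFE _ _ (hg n)]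
          exact Submodule.smul_mem _ _ (hSW (Or.inl ⟨n, rfl⟩))
      · exact hSW (Or.inr ⟨n + 1, hksucc n⟩)
    | zero => simp
    | add a b _ _ ha hb => rw [map_add]; exact Submodule.add_mem _ ha hb
    | smul a m _ hm => rw [map_smul]; exact Submodule.smul_mem _ _ hm
  have hWH : ∀ m ∈ W, H m ∈ W := by
    intro m hm
    induction hm using Submodule.span_induction with
    | mem s hs =>
      rcases hs with ⟨n, rfl⟩ | ⟨n, rfl⟩
      · rw [hg n]; exact Submodule.smul_mem _ _ (hSW (Or.inl ⟨n, rfl⟩))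
      · rw [hk n]; exact Submodule.smul_mem _ _ (hSW (Or.inr ⟨n, rfl⟩))
    | zero => simp
    | add a b _ _ ha hb => rw [map_add]; exact Submodule.add_mem _ ha hb
    | smul a m _ hm => rw [map_smul]; exact Submodule.smul_mem _ _ hm
  have hWtop : W = ⊤ := by
    rcases hsimple W (fun m hm => ⟨hWH m hm, hWE m hm, hWF m hm⟩) with hb | ht
    · exact absurd (hb ▸ hvW) (by simp [hvne])
    · exact ht
  -- the μ-weight space of W is spanned by v
  set X : Submodule ℂ M := ⨆ (ν : ℂ) (_ : ν ≠ μ), H.eigenspace ν with hXdef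
  have hWle : W ≤ Submodule.span ℂ {v} ⊔ X := by
    rw [hWdef]
    apply Submodule.span_le.mpr
    rintro s (⟨n, rfl⟩ | ⟨n, rfl⟩)
    · cases n with
      | zero =>
        rw [hg0]
        exact le_sup_left (α := Submodule ℂ M) (Submodule.mem_span_singleton_self v)
      | succ n =>
        have hmem : g (n + 1) ∈ H.eigenspace (μ + 2 * (n + 1 : ℕ)) :=
          Module.End.mem_eigenspace_iff.mpr (hg (n + 1))
        have hne' : (μ + 2 * ((n : ℂ) + 1)) ≠ μ := by
          intro hcon
          rw [add_eq_left] at hcon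
          have h2 : ((n : ℂ) + 1) ≠ 0 := Nat.cast_add_one_ne_zero n
          simpa [h2] using mul_eq_zero.mp hcon
        refine le_sup_right (α := Submodule ℂ M) ?_
        have : H.eigenspace (μ + 2 * (n + 1 : ℕ)) ≤ X := by
          rw [hXdef]
          exact le_iSup₂ (f := fun ν (_ : ν ≠ μ) => H.eigenspace ν)
            (μ + 2 * (n + 1 : ℕ)) (by push_cast; exact hne')
        exact this hmem
    · cases n with
      | zero =>
        rw [hk0]
        exact le_sup_left (α := Submodule ℂ M) (Submodule.mem_span_singleton_self v)
      | succ n =>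
        have hmem : k (n + 1) ∈ H.eigenspace (μ - 2 * (n + 1 : ℕ)) :=
          Module.End.mem_eigenspace_iff.mpr (hk (n + 1))
        have hne' : (μ - 2 * ((n : ℂ) + 1)) ≠ μ := by
          intro hcon
          rw [sub_eq_self] at hcon
          have h2 : ((n : ℂ) + 1) ≠ 0 := Nat.cast_add_one_ne_zero n
          simpa [h2] using mul_eq_zero.mp hcon
        refine le_sup_right (α := Submodule ℂ M) ?_
        have : H.eigenspace (μ - 2 * (n + 1 : ℕ)) ≤ X := by
          rw [hXdef]
          exact le_iSup₂ (f := fun ν (_ : ν ≠ μ) => H.eigenspace ν)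
            (μ - 2 * (n + 1 : ℕ)) (by push_cast; exact hne')
        exact this hmem
  have hdisj : Disjoint (H.eigenspace μ) X :=
    iSupIndep_def.mp H.eigenspaces_iSupIndep μ
  have hspan_le : Submodule.span ℂ {v} ≤ H.eigenspace μ := by
    rw [Submodule.span_le, Set.singleton_subset_iff]
    exact Module.End.mem_eigenspace_iff.mpr hvmem
  have hfinal : H.eigenspace μ ≤ Submodule.span ℂ {v} := by
    have h1 : H.eigenspace μ ≤ Submodule.span ℂ {v} ⊔ X := by
      calc H.eigenspace μ ≤ ⊤ := le_top
        _ = W := hWtop.symm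
        _ ≤ _ := hWle
    have h2 : H.eigenspace μ = (Submodule.span ℂ {v} ⊔ X) ⊓ H.eigenspace μ := by
      rw [inf_eq_right.mpr h1]
    rw [h2, sup_inf_assoc_of_le _ hspan_le, hdisj.symm.eq_bot, sup_bot_eq]
  calc Module.finrank ℂ (H.eigenspace μ) ≤ Module.finrank ℂ (Submodule.span ℂ {v}) :=
        Submodule.finrank_mono hfinal
    _ = 1 := finrank_span_singleton hvne
end

section
/- For a ∈ ℂ² with a₁, a₂ ∉ ℤ, the vector space N(a) with basis {x(k) : k ∈ ℤ} and action H·x(k) = (a₁−a₂+2k)x(k), X⁺·x(k) = (a₂−k)x(k+1), X⁻·x(k) = (a₁+k)x(k−1) is a well-defined sl(2,ℂ)-module, and it is simple. -/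
/-!
`H` acts diagonally on the basis `x(k)` with pairwise distinct eigenvalues `a₁ - a₂ + 2k`, so an
`H`-invariant subspace contains every component of each of its vectors (apply a Lagrange
interpolation polynomial in `H`). A nonzero invariant subspace therefore contains some `x(k)`.
Since `a₁, a₂ ∉ ℤ`, the coefficients `a₂ - k` of `X⁺` and `a₁ + k` of `X⁻` never vanish, so `X⁺`
and `X⁻` carry `x(k)` to every other basis vector.
-/

/-- The action of `H` on the module `N(a)`, on the basis `x(k), k ∈ ℤ`
(realized as `ℤ →₀ ℂ`, with `x k := Finsupp.single k 1`):
`H · x(k) = (a₁ - a₂ + 2k) x(k)`. -/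
noncomputable def sl2H (a₁ a₂ : ℂ) : Module.End ℂ (ℤ →₀ ℂ) :=
  Finsupp.lsum ℂ fun k : ℤ => (a₁ - a₂ + 2 * (k : ℂ)) • Finsupp.lsingle k

/-- The action of `X⁺` on `N(a)`: `X⁺ · x(k) = (a₂ - k) x(k+1)`. -/
noncomputable def sl2E (a₂ : ℂ) : Module.End ℂ (ℤ →₀ ℂ) :=
  Finsupp.lsum ℂ fun k : ℤ => (a₂ - (k : ℂ)) • Finsupp.lsingle (k + 1)

/-- The action of `X⁻` on `N(a)`: `X⁻ · x(k) = (a₁ + k) x(k-1)`. -/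
noncomputable def sl2F (a₁ : ℂ) : Module.End ℂ (ℤ →₀ ℂ) :=
  Finsupp.lsum ℂ fun k : ℤ => (a₁ + (k : ℂ)) • Finsupp.lsingle (k - 1)

open Polynomial

theorem Module.End.aeval_apply_mem_of_forall_mem {R M : Type*} [CommSemiring R] [AddCommMonoid M]
    [Module R M] {f : Module.End R M} {p : Submodule R M} (hp : ∀ v ∈ p, f v ∈ p) (q : R[X])
    {v : M} (hv : v ∈ p) : aeval f q v ∈ p := by
  induction q using Polynomial.induction_on' with
  | add q r hq hr => simpa using p.add_mem hq hr
  | monomial n c =>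
    simpa [← C_mul_X_pow_eq_monomial] using
      p.smul_mem c (Module.End.pow_apply_mem_of_forall_mem n hp v hv)

theorem Finsupp.single_apply_mem_of_diagonal_invariant {K ι : Type*} [Field K]
    {μ : ι → K} (hμ : Function.Injective μ) {f : Module.End K (ι →₀ K)}
    (hf : ∀ i c, f (single i c) = μ i • single i c) {p : Submodule K (ι →₀ K)}
    (hp : ∀ v ∈ p, f v ∈ p) {v : ι →₀ K} (hv : v ∈ p) (j : ι) : single j (v j) ∈ p := by
  classical
  by_cases hj : j ∈ v.support
  swap
  · simp [Finsupp.notMem_support_iff.1 hj]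
  set q := Lagrange.basis v.support μ j
  have hinterp : aeval f q v = single j (v j) := by
    conv_lhs => rw [← v.sum_single]
    rw [map_finsuppSum, Finsupp.sum, Finset.sum_eq_single j]
    · rw [Module.End.aeval_apply_of_mem_apply_eq_smul (hf j _),
        Lagrange.eval_basis_self hμ.injOn hj, one_smul]
    · intro i hi hij
      rw [Module.End.aeval_apply_of_mem_apply_eq_smul (hf i _),
        Lagrange.eval_basis_of_ne (Ne.symm hij) hi, zero_smul]
    · exact fun h => (h hj).elim
  exact hinterp ▸ Module.End.aeval_apply_mem_of_forall_mem hp _ hv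

theorem Finsupp.eq_top_of_forall_single_one_mem {R ι : Type*} [Semiring R]
    {p : Submodule R (ι →₀ R)} (h : ∀ i, single i 1 ∈ p) : p = ⊤ := by
  rw [eq_top_iff, ← Finsupp.basisSingleOne.span_eq, Submodule.span_le]
  rintro _ ⟨i, rfl⟩
  simpa using h i

section sl2Module

variable (a₁ a₂ : ℂ)

theorem sl2H_single (k : ℤ) (c : ℂ) :
    sl2H a₁ a₂ (Finsupp.single k c) = (a₁ - a₂ + 2 * (k : ℂ)) • Finsupp.single k c := by
  simp [sl2H]

theorem sl2E_single (k : ℤ) (c : ℂ) :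
    sl2E a₂ (Finsupp.single k c) = (a₂ - (k : ℂ)) • Finsupp.single (k + 1) c := by
  simp [sl2E]

theorem sl2F_single (k : ℤ) (c : ℂ) :
    sl2F a₁ (Finsupp.single k c) = (a₁ + (k : ℂ)) • Finsupp.single (k - 1) c := by
  simp [sl2F]

theorem sl2H_lie_sl2E : ⁅sl2H a₁ a₂, sl2E a₂⁆ = (2 : ℂ) • sl2E a₂ := by
  refine Finsupp.lhom_ext fun k c => ?_
  simp only [LieRing.of_associative_ring_bracket, LinearMap.sub_apply, Module.End.mul_apply,
    LinearMap.smul_apply, sl2H_single, sl2E_single, map_smul, smul_smul, ← sub_smul]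
  push_cast
  ring_nf

theorem sl2H_lie_sl2F : ⁅sl2H a₁ a₂, sl2F a₁⁆ = (-2 : ℂ) • sl2F a₁ := by
  refine Finsupp.lhom_ext fun k c => ?_
  simp only [LieRing.of_associative_ring_bracket, LinearMap.sub_apply, Module.End.mul_apply,
    LinearMap.smul_apply, sl2H_single, sl2F_single, map_smul, smul_smul, ← sub_smul]
  push_cast
  ring_nf

theorem sl2E_lie_sl2F : ⁅sl2E a₂, sl2F a₁⁆ = sl2H a₁ a₂ := by
  refine Finsupp.lhom_ext fun k c => ?_
  simp only [LieRing.of_associative_ring_bracket, LinearMap.sub_apply, Module.End.mul_apply,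
    sl2H_single, sl2E_single, sl2F_single, map_smul, smul_smul, sub_add_cancel,
    add_sub_cancel_right, ← sub_smul]
  push_cast
  ring_nf

theorem sl2_invariant_eq_bot_or_eq_top (ha₁ : ∀ n : ℤ, a₁ ≠ n) (ha₂ : ∀ n : ℤ, a₂ ≠ n)
    {p : Submodule ℂ (ℤ →₀ ℂ)} (hH : ∀ v ∈ p, sl2H a₁ a₂ v ∈ p) (hE : ∀ v ∈ p, sl2E a₂ v ∈ p)
    (hF : ∀ v ∈ p, sl2F a₁ v ∈ p) : p = ⊥ ∨ p = ⊤ := by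
  refine or_iff_not_imp_left.2 fun hp => Finsupp.eq_top_of_forall_single_one_mem ?_
  obtain ⟨v, hv, hv0⟩ := (Submodule.ne_bot_iff p).1 hp
  obtain ⟨k, hk⟩ : ∃ k, v k ≠ 0 := by simpa [Finsupp.ext_iff] using hv0
  have hμ : Function.Injective fun k : ℤ => a₁ - a₂ + 2 * (k : ℂ) := fun k l h => by simpa using h
  have hxk : Finsupp.single k 1 ∈ p := by
    rw [← p.smul_mem_iff hk, Finsupp.smul_single_one]
    exact Finsupp.single_apply_mem_of_diagonal_invariant hμ (sl2H_single a₁ a₂) hH hv k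
  intro m
  induction m using Int.inductionOn' (b := k) with
  | zero => exact hxk
  | succ i _ hi =>
    rw [← p.smul_mem_iff (sub_ne_zero.2 (ha₂ i)), ← sl2E_single]
    exact hE _ hi
  | pred i _ hi =>
    have hc : a₁ + i ≠ 0 := fun h => ha₁ (-i) (by push_cast; linear_combination h)
    rw [← p.smul_mem_iff hc, ← sl2F_single]
    exact hF _ hi

end sl2Module

/-- For `a = (a₁, a₂) ∈ ℂ²` with `a₁, a₂ ∉ ℤ`, the prescribed formulas on
the basis `x(k), k ∈ ℤ`, define a genuine `sl(2,ℂ)`-module structure on `N(a)` (the three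
operators satisfy the `sl₂`-relations, where the bracket on `Module.End` is the
commutator), and this module is simple: any subspace invariant under `H, X⁺, X⁻` is `⊥`
or `⊤`. -/
theorem stmt_2 (a₁ a₂ : ℂ)
    (ha₁ : ∀ n : ℤ, a₁ ≠ (n : ℂ)) (ha₂ : ∀ n : ℤ, a₂ ≠ (n : ℂ)) :
    -- the formulas from the paper hold on the basis vectors
    (∀ k : ℤ,
        sl2H a₁ a₂ (Finsupp.single k 1) = (a₁ - a₂ + 2 * (k : ℂ)) • Finsupp.single k 1 ∧
        sl2E a₂ (Finsupp.single k 1) = (a₂ - (k : ℂ)) • Finsupp.single (k + 1) 1 ∧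
        sl2F a₁ (Finsupp.single k 1) = (a₁ + (k : ℂ)) • Finsupp.single (k - 1) 1) ∧
    -- the `sl₂`-relations hold, so `N(a)` is a well-defined `sl(2,ℂ)`-module
    (⁅sl2H a₁ a₂, sl2E a₂⁆ = (2 : ℂ) • sl2E a₂ ∧
     ⁅sl2H a₁ a₂, sl2F a₁⁆ = (-2 : ℂ) • sl2F a₁ ∧
     ⁅sl2E a₂, sl2F a₁⁆ = sl2H a₁ a₂) ∧
    -- simplicity
    (∀ p : Submodule ℂ (ℤ →₀ ℂ),
      (∀ v ∈ p, sl2H a₁ a₂ v ∈ p ∧ sl2E a₂ v ∈ p ∧ sl2F a₁ v ∈ p) → p = ⊥ ∨ p = ⊤) := by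
  refine ⟨fun k => ⟨sl2H_single a₁ a₂ k 1, sl2E_single a₂ k 1, sl2F_single a₁ k 1⟩,
    ⟨sl2H_lie_sl2E a₁ a₂, sl2H_lie_sl2F a₁ a₂, sl2E_lie_sl2F a₁ a₂⟩, fun p hp =>
      sl2_invariant_eq_bot_or_eq_top a₁ a₂ ha₁ ha₂ (fun v hv => (hp v hv).1)
        (fun v hv => (hp v hv).2.1) (fun v hv => (hp v hv).2.2)⟩
end

section
/- For a ∈ ℂ² with a₁, a₂ ∉ ℤ, both X⁺ and X⁻ act injectively (in fact bijectively) on the sl(2,ℂ)-module N(a). -/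
/-- Inverse of `sl2E`. -/
noncomputable def sl2Einv (a₂ : ℂ) : Module.End ℂ (ℤ →₀ ℂ) :=
  Finsupp.lsum ℂ fun k : ℤ => (a₂ - ((k : ℂ) - 1))⁻¹ • Finsupp.lsingle (k - 1)

/-- Inverse of `sl2F`. -/
noncomputable def sl2Finv (a₁ : ℂ) : Module.End ℂ (ℤ →₀ ℂ) :=
  Finsupp.lsum ℂ fun k : ℤ => (a₁ + ((k : ℂ) + 1))⁻¹ • Finsupp.lsingle (k + 1)

/-- For `a = (a₁, a₂) ∈ ℂ²` with `a₁, a₂ ∉ ℤ`, both `X⁺` and `X⁻` act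
injectively — in fact bijectively — on the `sl(2,ℂ)`-module `N(a)`. -/
theorem stmt_3 (a₁ a₂ : ℂ)
    (ha₁ : ∀ n : ℤ, a₁ ≠ (n : ℂ)) (ha₂ : ∀ n : ℤ, a₂ ≠ (n : ℂ)) :
    Function.Bijective (sl2E a₂) ∧ Function.Bijective (sl2F a₁) := by
  have h2 : ∀ k : ℤ, a₂ - (k : ℂ) ≠ 0 := fun k h => ha₂ k (by linear_combination h)
  have h1 : ∀ k : ℤ, a₁ + (k : ℂ) ≠ 0 := fun k h => ha₁ (-k) (by push_cast; linear_combination h)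
  have he1 : sl2Einv a₂ ∘ₗ sl2E a₂ = LinearMap.id := by
    ext k
    simp only [sl2E, sl2Einv, LinearMap.comp_apply, Finsupp.lsum_single, LinearMap.smul_apply,
      Finsupp.lsingle_apply, Finsupp.smul_single, map_smul, LinearMap.id_coe, id_eq, smul_smul,
      add_sub_cancel_right]
    rw [show ((k + 1 : ℤ) : ℂ) - 1 = (k : ℂ) by push_cast; ring, mul_inv_cancel₀ (h2 k)]
    simp
  have he2 : sl2E a₂ ∘ₗ sl2Einv a₂ = LinearMap.id := by
    ext k
    have hk : a₂ - ((k : ℂ) - 1) ≠ 0 := fun H => h2 (k - 1) (by push_cast; linear_combination H)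
    simp only [sl2E, sl2Einv, LinearMap.comp_apply, Finsupp.lsum_single, LinearMap.smul_apply,
      Finsupp.lsingle_apply, Finsupp.smul_single, map_smul, LinearMap.id_coe, id_eq, smul_smul,
      sub_add_cancel]
    rw [show ((k - 1 : ℤ) : ℂ) = (k : ℂ) - 1 by push_cast; ring, inv_mul_cancel₀ hk]
    simp
  have hf1 : sl2Finv a₁ ∘ₗ sl2F a₁ = LinearMap.id := by
    ext k
    simp only [sl2F, sl2Finv, LinearMap.comp_apply, Finsupp.lsum_single, LinearMap.smul_apply,
      Finsupp.lsingle_apply, Finsupp.smul_single, map_smul, LinearMap.id_coe, id_eq, smul_smul,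
      sub_add_cancel]
    rw [show ((k - 1 : ℤ) : ℂ) + 1 = (k : ℂ) by push_cast; ring, mul_inv_cancel₀ (h1 k)]
    simp
  have hf2 : sl2F a₁ ∘ₗ sl2Finv a₁ = LinearMap.id := by
    ext k
    have hk : a₁ + ((k : ℂ) + 1) ≠ 0 := fun H => h1 (k + 1) (by push_cast; linear_combination H)
    simp only [sl2F, sl2Finv, LinearMap.comp_apply, Finsupp.lsum_single, LinearMap.smul_apply,
      Finsupp.lsingle_apply, Finsupp.smul_single, map_smul, LinearMap.id_coe, id_eq, smul_smul,
      add_sub_cancel_right]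
    rw [show ((k + 1 : ℤ) : ℂ) = (k : ℂ) + 1 by push_cast; ring, inv_mul_cancel₀ hk]
    simp
  refine ⟨Function.bijective_iff_has_inverse.mpr ⟨sl2Einv a₂, ?_, ?_⟩,
    Function.bijective_iff_has_inverse.mpr ⟨sl2Finv a₁, ?_, ?_⟩⟩
  · intro x; have := LinearMap.congr_fun he1 x; simpa using this
  · intro x; have := LinearMap.congr_fun he2 x; simpa using this
  · intro x; have := LinearMap.congr_fun hf1 x; simpa using this
  · intro x; have := LinearMap.congr_fun hf2 x; simpa using this
end

section
/- Let N be a weight module over a complex reductive Lie algebra g with root system R. Let α, γ ∈ R satisfy α+γ ∈ R and α−γ ∉ R. Suppose that for every weight vector v ∈ N one has X_α X_{−α} v ∈ ℂv and X_γ X_{−γ} v ∈ ℂv, where X_β denotes a fixed nonzero root vector for β. Then X_{α+γ} X_{−α−γ} v ∈ ℂv for every weight vector v ∈ N. -/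
/-- The weight space, for the weight `χ : H → ℂ`, of a module `N` over a complex Lie
algebra `g` with respect to a subalgebra `H` (a Cartan subalgebra in the applications):
the space of vectors on which every `x ∈ H` acts by the scalar `χ x`.  (Applying this to
`N := g` with the adjoint action yields the root spaces of `g`.) -/
def wtSpace {g : Type*} [LieRing g] [LieAlgebra ℂ g] (H : LieSubalgebra ℂ g)
    (N : Type*) [AddCommGroup N] [Module ℂ N] [LieRingModule g N] [LieModule ℂ g N]
    (χ : H → ℂ) : Submodule ℂ N where
  carrier := {v | ∀ x : H, ⁅(x : g), v⁆ = χ x • v}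
  add_mem' := by
    intro u v hu hv x
    rw [lie_add, hu x, hv x, smul_add]
  zero_mem' := by
    intro x
    rw [lie_zero, smul_zero]
  smul_mem' := by
    intro t v hv x
    rw [lie_smul, hv x, smul_comm]


lemma wt_lie_mem {g : Type*} [LieRing g] [LieAlgebra ℂ g] (H : LieSubalgebra ℂ g)
    {N : Type*} [AddCommGroup N] [Module ℂ N] [LieRingModule g N] [LieModule ℂ g N]
    {β χ : H → ℂ} {x : g} {v : N} (hx : x ∈ wtSpace H g β) (hv : v ∈ wtSpace H N χ) :
    ⁅x, v⁆ ∈ wtSpace H N (β + χ) := by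
  intro h
  rw [leibniz_lie, hx h, hv h, smul_lie, lie_smul, Pi.add_apply, add_smul]

/-- Let `N` be a weight module over a reductive complex Lie algebra `g`
(with Cartan subalgebra `H`: `N` is `H`-diagonalizable with finite-dimensional weight
spaces).  Let `α, γ` be roots with root vectors `Xa ∈ g_α`, `Xma ∈ g_{-α}`, `Xg ∈ g_γ`,
`Xmg ∈ g_{-γ}`, `Xag ∈ g_{α+γ}`, `Xmag ∈ g_{-α-γ}`, such that `α + γ ∈ R` and
`α - γ ∉ R`; following the paper these two root-theoretic conditions enter through the
facts `[X_α, X_{-γ}] = 0`, `[X_{-α}, X_γ] = 0`, and `[X_α, X_γ]` (resp.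
`[X_{-α}, X_{-γ}]`) is a nonzero multiple of `X_{α+γ}` (resp. `X_{-α-γ}`).
If `X_α X_{-α} v ∈ ℂ v` and `X_γ X_{-γ} v ∈ ℂ v` for every weight vector `v ∈ N`, then
`X_{α+γ} X_{-α-γ} v ∈ ℂ v` for every weight vector `v ∈ N`. -/
theorem stmt_4
    (g : Type*) [LieRing g] [LieAlgebra ℂ g] [FiniteDimensional ℂ g]
    (H : LieSubalgebra ℂ g) [H.IsCartanSubalgebra]
    (N : Type*) [AddCommGroup N] [Module ℂ N] [LieRingModule g N] [LieModule ℂ g N]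
    -- `N` is a weight module
    (hdiag : (⨆ χ : H → ℂ, wtSpace H N χ) = ⊤)
    (hfd : ∀ χ : H → ℂ, FiniteDimensional ℂ (wtSpace H N χ))
    -- the roots and root vectors
    (α γ : H → ℂ)
    (Xa Xma Xg Xmg Xag Xmag : g)
    (hXa : Xa ∈ wtSpace H g α) (hXa0 : Xa ≠ 0)
    (hXma : Xma ∈ wtSpace H g (-α)) (hXma0 : Xma ≠ 0)
    (hXg : Xg ∈ wtSpace H g γ) (hXg0 : Xg ≠ 0)
    (hXmg : Xmg ∈ wtSpace H g (-γ)) (hXmg0 : Xmg ≠ 0)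
    (hXag : Xag ∈ wtSpace H g (α + γ)) (hXag0 : Xag ≠ 0)
    (hXmag : Xmag ∈ wtSpace H g (-(α + γ))) (hXmag0 : Xmag ≠ 0)
    -- consequences of `α - γ ∉ R`
    (hcomm₁ : ⁅Xa, Xmg⁆ = 0) (hcomm₂ : ⁅Xma, Xg⁆ = 0)
    -- consequences of `α + γ ∈ R`
    (hc : ∃ c : ℂ, c ≠ 0 ∧ ⁅Xa, Xg⁆ = c • Xag)
    (hd : ∃ d : ℂ, d ≠ 0 ∧ ⁅Xma, Xmg⁆ = d • Xmag)
    -- the hypothesis on weight vectors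
    (hyp : ∀ (χ : H → ℂ) (v : N), v ∈ wtSpace H N χ →
      (∃ s : ℂ, ⁅Xa, ⁅Xma, v⁆⁆ = s • v) ∧ (∃ t : ℂ, ⁅Xg, ⁅Xmg, v⁆⁆ = t • v)) :
    ∀ (χ : H → ℂ) (v : N), v ∈ wtSpace H N χ →
      ∃ t : ℂ, ⁅Xag, ⁅Xmag, v⁆⁆ = t • v := by
  obtain ⟨c, hc0, hcEq⟩ := hc
  obtain ⟨d, hd0, hdEq⟩ := hd
  intro χ v hv
  -- commutation on the module
  have hAD : ∀ w : N, ⁅Xa, ⁅Xmg, w⁆⁆ = ⁅Xmg, ⁅Xa, w⁆⁆ := by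
    intro w
    have h := lie_lie Xa Xmg w
    rw [hcomm₁, zero_lie] at h
    exact sub_eq_zero.mp h.symm
  have hBC : ∀ w : N, ⁅Xma, ⁅Xg, w⁆⁆ = ⁅Xg, ⁅Xma, w⁆⁆ := by
    intro w
    have h := lie_lie Xma Xg w
    rw [hcomm₂, zero_lie] at h
    exact sub_eq_zero.mp h.symm
  obtain ⟨⟨s, hs⟩, ⟨t, ht⟩⟩ := hyp χ v hv
  obtain ⟨-, ⟨t', ht'⟩⟩ := hyp (-α + χ) ⁅Xma, v⁆ (wt_lie_mem H hXma hv)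
  obtain ⟨⟨s', hs'⟩, -⟩ := hyp (-γ + χ) ⁅Xmg, v⁆ (wt_lie_mem H hXmg hv)
  have h1 : ⁅Xa, ⁅Xg, ⁅Xma, ⁅Xmg, v⁆⁆⁆⁆ = (t * s) • v := by
    rw [← hBC, ht, lie_smul, lie_smul, hs, smul_smul]
  have h2 : ⁅Xa, ⁅Xg, ⁅Xmg, ⁅Xma, v⁆⁆⁆⁆ = (t' * s) • v := by
    rw [ht', lie_smul, hs, smul_smul]
  have h3 : ⁅Xg, ⁅Xa, ⁅Xma, ⁅Xmg, v⁆⁆⁆⁆ = (s' * t) • v := by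
    rw [hs', lie_smul, ht, smul_smul]
  have h4 : ⁅Xg, ⁅Xa, ⁅Xmg, ⁅Xma, v⁆⁆⁆⁆ = (s * t) • v := by
    rw [hAD, hs, lie_smul, lie_smul, ht, smul_smul]
  have key : ⁅⁅Xa, Xg⁆, ⁅⁅Xma, Xmg⁆, v⁆⁆
      = ((t * s) - (t' * s) - (s' * t) + (s * t)) • v := by
    simp only [lie_lie, lie_sub]
    rw [h1, h2, h3, h4]
    module
  have hXagEq : Xag = c⁻¹ • ⁅Xa, Xg⁆ := by
    rw [hcEq, smul_smul, inv_mul_cancel₀ hc0, one_smul]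
  have hXmagEq : Xmag = d⁻¹ • ⁅Xma, Xmg⁆ := by
    rw [hdEq, smul_smul, inv_mul_cancel₀ hd0, one_smul]
  refine ⟨c⁻¹ * (d⁻¹ * ((t * s) - (t' * s) - (s' * t) + (s * t))), ?_⟩
  rw [hXagEq, hXmagEq, smul_lie, smul_lie, lie_smul, key, smul_smul, smul_smul, mul_assoc]
end

section
/- Let N be a weight module over a complex reductive Lie algebra g with root system R. Let α, γ ∈ R satisfy α+γ ∈ R, 2α+γ ∈ R and α−γ ∉ R. If X_α X_{−α} v ∈ ℂv and X_γ X_{−γ} v ∈ ℂv for every weight vector v ∈ N, then X_{2α+γ} X_{−2α−γ} v ∈ ℂv for every weight vector v ∈ N. -/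
lemma wt_lie {g : Type*} [LieRing g] [LieAlgebra ℂ g] (H : LieSubalgebra ℂ g)
    {N : Type*} [AddCommGroup N] [Module ℂ N] [LieRingModule g N] [LieModule ℂ g N]
    {β ψ : H → ℂ} {X : g} {w : N} (hX : X ∈ wtSpace H g β) (hw : w ∈ wtSpace H N ψ) :
    ⁅X, w⁆ ∈ wtSpace H N (β + ψ) := by
  intro x
  rw [leibniz_lie, hX x, hw x, smul_lie, lie_smul, Pi.add_apply, add_smul]

lemma wt0_mem {g : Type*} [LieRing g] [LieAlgebra ℂ g] [FiniteDimensional ℂ g]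
    (H : LieSubalgebra ℂ g) [H.IsCartanSubalgebra] {X : g}
    (hX : X ∈ wtSpace H g (0 : H → ℂ)) : X ∈ H := by
  rw [← LieAlgebra.zeroRootSubalgebra_eq_of_is_cartan ℂ g H,
    LieAlgebra.mem_zeroRootSubalgebra]
  intro y
  exact ⟨1, by simpa using hX y⟩

/-- Let `N` be a weight module over a reductive complex Lie algebra `g`
with Cartan subalgebra `H`.  Let `α, γ` be roots with `α + γ ∈ R`, `2α + γ ∈ R` and
`α - γ ∉ R`, with root vectors `Xa ∈ g_α`, `Xma ∈ g_{-α}`, `Xg ∈ g_γ`, `Xmg ∈ g_{-γ}`,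
`Xag ∈ g_{α+γ}`, `X2ag ∈ g_{2α+γ}`, `Xm2ag ∈ g_{-2α-γ}`.  The root-theoretic conditions
enter through the facts `[X_α, X_{-γ}] = 0`, `[X_{-α}, X_γ] = 0`, `[X_α, X_γ]` is a
nonzero multiple of `X_{α+γ}`, and `[X_α, [X_α, X_γ]]` (resp. `[X_{-α},[X_{-α},X_{-γ}]]`)
is a nonzero multiple of `X_{2α+γ}` (resp. `X_{-2α-γ}`).
If `X_α X_{-α} v ∈ ℂ v` and `X_γ X_{-γ} v ∈ ℂ v` for every weight vector `v ∈ N`, then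
`X_{2α+γ} X_{-2α-γ} v ∈ ℂ v` for every weight vector `v ∈ N`. -/
theorem stmt_5
    (g : Type*) [LieRing g] [LieAlgebra ℂ g] [FiniteDimensional ℂ g]
    (H : LieSubalgebra ℂ g) [H.IsCartanSubalgebra]
    (N : Type*) [AddCommGroup N] [Module ℂ N] [LieRingModule g N] [LieModule ℂ g N]
    -- `N` is a weight module
    (hdiag : (⨆ χ : H → ℂ, wtSpace H N χ) = ⊤)
    (hfd : ∀ χ : H → ℂ, FiniteDimensional ℂ (wtSpace H N χ))
    -- the roots and root vectors
    (α γ : H → ℂ)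
    (Xa Xma Xg Xmg Xag X2ag Xm2ag : g)
    (hXa : Xa ∈ wtSpace H g α) (hXa0 : Xa ≠ 0)
    (hXma : Xma ∈ wtSpace H g (-α)) (hXma0 : Xma ≠ 0)
    (hXg : Xg ∈ wtSpace H g γ) (hXg0 : Xg ≠ 0)
    (hXmg : Xmg ∈ wtSpace H g (-γ)) (hXmg0 : Xmg ≠ 0)
    (hXag : Xag ∈ wtSpace H g (α + γ)) (hXag0 : Xag ≠ 0)
    (hX2ag : X2ag ∈ wtSpace H g (2 • α + γ)) (hX2ag0 : X2ag ≠ 0)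
    (hXm2ag : Xm2ag ∈ wtSpace H g (-(2 • α + γ))) (hXm2ag0 : Xm2ag ≠ 0)
    -- consequences of `α - γ ∉ R`
    (hcomm₁ : ⁅Xa, Xmg⁆ = 0) (hcomm₂ : ⁅Xma, Xg⁆ = 0)
    -- consequences of `α + γ ∈ R` and `2α + γ ∈ R`
    (hag : ∃ e : ℂ, e ≠ 0 ∧ ⁅Xa, Xg⁆ = e • Xag)
    (hc : ∃ c : ℂ, c ≠ 0 ∧ ⁅Xa, ⁅Xa, Xg⁆⁆ = c • X2ag)
    (hd : ∃ d : ℂ, d ≠ 0 ∧ ⁅Xma, ⁅Xma, Xmg⁆⁆ = d • Xm2ag)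
    -- the hypothesis on weight vectors
    (hyp : ∀ (χ : H → ℂ) (v : N), v ∈ wtSpace H N χ →
      (∃ s : ℂ, ⁅Xa, ⁅Xma, v⁆⁆ = s • v) ∧ (∃ t : ℂ, ⁅Xg, ⁅Xmg, v⁆⁆ = t • v)) :
    ∀ (χ : H → ℂ) (v : N), v ∈ wtSpace H N χ →
      ∃ t : ℂ, ⁅X2ag, ⁅Xm2ag, v⁆⁆ = t • v := by
  obtain ⟨c, hc0, hcX⟩ := hc
  obtain ⟨d, hd0, hdX⟩ := hd
  -- the commuting actions on `N`
  have comm₁ : ∀ w : N, ⁅Xa, ⁅Xmg, w⁆⁆ = ⁅Xmg, ⁅Xa, w⁆⁆ := by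
    intro w
    have h := lie_lie Xa Xmg w
    rw [hcomm₁, zero_lie, eq_comm, sub_eq_zero] at h
    exact h
  have comm₂ : ∀ w : N, ⁅Xma, ⁅Xg, w⁆⁆ = ⁅Xg, ⁅Xma, w⁆⁆ := by
    intro w
    have h := lie_lie Xma Xg w
    rw [hcomm₂, zero_lie, eq_comm, sub_eq_zero] at h
    exact h
  -- the Cartan element `h' = ⁅Xa, Xma⁆`
  have hwt0 : ⁅Xa, Xma⁆ ∈ wtSpace H g (0 : H → ℂ) := by
    have h := wt_lie H hXa hXma
    rwa [add_neg_cancel] at h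
  set h' : H := ⟨⁅Xa, Xma⁆, wt0_mem H hwt0⟩ with hh'
  set m : ℂ := γ h' with hm
  -- two structural identities in `g`
  have hXgh : ⁅(⁅Xa, Xma⁆ : g), Xg⁆ = m • Xg := hXg h'
  have hXmgh : ⁅(⁅Xa, Xma⁆ : g), Xmg⁆ = -m • Xmg := by
    have h := hXmg h'
    rw [h]
    simp [hm]
  have hMaE : ⁅⁅Xa, Xg⁆, Xma⁆ = m • Xg := by
    have h := leibniz_lie Xma Xa Xg
    rw [hcomm₂, lie_zero, add_zero] at h
    rw [← lie_skew ⁅Xa, Xg⁆ Xma, h, ← lie_skew Xma Xa, neg_lie, neg_neg]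
    exact hXgh
  have hAF : ⁅Xa, ⁅Xma, Xmg⁆⁆ = -m • Xmg := by
    have h := leibniz_lie Xa Xma Xmg
    rw [hcomm₁, lie_zero, add_zero] at h
    rw [h]
    exact hXmgh
  -- the `⁅Xa,Xg⁆⁅⁅Xma,Xmg⁆,·⁆` block is scalar on weight vectors
  have D1 : ∀ (ψ : H → ℂ) (w : N), w ∈ wtSpace H N ψ →
      ∃ s : ℂ, ⁅⁅Xa, Xg⁆, ⁅⁅Xma, Xmg⁆, w⁆⁆ = s • w := by
    intro ψ w hw
    obtain ⟨p, hp⟩ := (hyp ψ w hw).1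
    obtain ⟨q, hq⟩ := (hyp ψ w hw).2
    obtain ⟨q', hq'⟩ := (hyp _ _ (wt_lie H hXma hw)).2
    obtain ⟨p', hp'⟩ := (hyp _ _ (wt_lie H hXmg hw)).1
    refine ⟨q * p - q' * p - p' * q + p * q, ?_⟩
    rw [lie_lie Xma Xmg w, lie_sub, lie_lie Xa Xg, lie_lie Xa Xg]
    rw [← comm₂ ⁅Xmg, w⁆, hq, hq', comm₁ ⁅Xma, w⁆, hp, hp']
    simp only [lie_smul, hp, hq, smul_smul]
    module
  intro χ v hv
  obtain ⟨p, hp⟩ := (hyp χ v hv).1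
  obtain ⟨q, hq⟩ := (hyp χ v hv).2
  have hz : ⁅Xma, v⁆ ∈ wtSpace H N (-α + χ) := wt_lie H hXma hv
  obtain ⟨q', hq'⟩ := (hyp _ _ hz).2
  have hFv : ⁅⁅Xma, Xmg⁆, v⁆ ∈ wtSpace H N ((-α + -γ) + χ) :=
    wt_lie H (wt_lie H hXma hXmg) hv
  obtain ⟨p1, hp1⟩ := (hyp _ _ hFv).1
  obtain ⟨s2, hs2⟩ := D1 χ v hv
  obtain ⟨s1, hs1⟩ := D1 _ _ hz
  -- auxiliary evaluations
  have hW : ⁅⁅Xa, Xg⁆, ⁅Xmg, ⁅Xma, v⁆⁆⁆ = q' • p • v - p • q • v := by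
    rw [lie_lie Xa Xg, hq', comm₁ ⁅Xma, v⁆, hp]
    simp only [lie_smul, hp, hq, smul_smul]
  have hU : ⁅Xa, ⁅Xg, ⁅⁅Xma, Xmg⁆, v⁆⁆⁆ = q • p • v - q' • p • v := by
    rw [lie_lie Xma Xmg v, lie_sub, lie_sub, ← comm₂ ⁅Xmg, v⁆, hq, hq']
    simp only [lie_smul, hp, smul_smul]
  have i1 : ⁅⁅Xa, Xg⁆, ⁅Xma, ⁅⁅Xma, Xmg⁆, v⁆⁆⁆
      = m • ⁅Xg, ⁅⁅Xma, Xmg⁆, v⁆⁆ + s2 • ⁅Xma, v⁆ := by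
    rw [leibniz_lie ⁅Xa, Xg⁆ Xma]
    rw [hMaE, smul_lie, hs2]
    try rw [lie_smul]
  have i4 : ⁅Xa, ⁅⁅Xma, Xmg⁆, ⁅Xma, v⁆⁆⁆
      = -m • ⁅Xmg, ⁅Xma, v⁆⁆ + p • ⁅⁅Xma, Xmg⁆, v⁆ := by
    rw [leibniz_lie Xa ⁅Xma, Xmg⁆]
    rw [hAF, smul_lie, hp]
    try rw [lie_smul]
  -- the main computation
  have key : ⁅⁅Xa, ⁅Xa, Xg⁆⁆, ⁅⁅Xma, ⁅Xma, Xmg⁆⁆, v⁆⁆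
      = (m * (2 * (q * p) - 2 * (q' * p)) + 2 * (s2 * p) - s1 * p - p1 * s2) • v := by
    rw [lie_lie Xma ⁅Xma, Xmg⁆ v, lie_lie Xa ⁅Xa, Xg⁆]
    simp only [lie_sub, lie_add]
    rw [i1, i4, hs1, hp1]
    simp only [lie_add, lie_sub, lie_neg, lie_smul, hU, hW, hp, hs2, smul_sub, smul_add,
      smul_smul, neg_smul, smul_neg]
    module
  rw [hcX, hdX] at key
  rw [smul_lie, smul_lie, lie_smul, smul_smul] at key
  refine ⟨(c * d)⁻¹ * (m * (2 * (q * p) - 2 * (q' * p)) + 2 * (s2 * p) - s1 * p - p1 * s2), ?_⟩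
  have h2 : (c * d)⁻¹ * (c * d) = 1 := inv_mul_cancel₀ (mul_ne_zero hc0 hd0)
  calc ⁅X2ag, ⁅Xm2ag, v⁆⁆ = ((c * d)⁻¹ * (c * d)) • ⁅X2ag, ⁅Xm2ag, v⁆⁆ := by
        rw [h2, one_smul]
    _ = (c * d)⁻¹ • ((c * d) • ⁅X2ag, ⁅Xm2ag, v⁆⁆) := by rw [smul_smul]
    _ = (c * d)⁻¹ • ((m * (2 * (q * p) - 2 * (q' * p)) + 2 * (s2 * p) - s1 * p - p1 * s2) • v) := by
        rw [key]
    _ = ((c * d)⁻¹ * (m * (2 * (q * p) - 2 * (q' * p)) + 2 * (s2 * p) - s1 * p - p1 * s2)) • v := by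
        rw [smul_smul]
end

section
/- For a ∈ ℂ^N, the vector space W(a) with basis indexed by K = {k ∈ ℤ^N : if a_i ∈ ℤ then (a_i + k_i < 0 ⟺ a_i < 0)} and the prescribed actions of q_i and p_i is a simple module over the Weyl algebra W_N. -/
open scoped Classical

/-- The index set `K = {k ∈ ℤ^N : a_i ∈ ℤ → (a_i + k_i < 0 ↔ a_i < 0)}`. -/
def weylK {N : ℕ} (a : Fin N → ℂ) : Set (Fin N → ℤ) :=
  {k | ∀ i : Fin N, ∀ m : ℤ, a i = (m : ℂ) → (m + k i < 0 ↔ m < 0)}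

/-- The underlying space `W(a)`, with basis `x(k) = Finsupp.single k 1` indexed by
`k ∈ K`. -/
abbrev weylW {N : ℕ} (a : Fin N → ℂ) : Type := ↥(weylK a) →₀ ℂ

/-- The action of the generator `q_i` of the Weyl algebra `W_N` on `W(a)`:
`q_i · x(k) = (a_i + k_i + 1) x(k + ε_i)` if `a_i ∈ ℤ_{<0}`, `q_i · x(k) = x(k + ε_i)`
otherwise, with the convention `x(k') = 0` for `k' ∉ K`. -/
noncomputable def weylQ {N : ℕ} (a : Fin N → ℂ) (i : Fin N) : Module.End ℂ (weylW a) :=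
  Finsupp.lsum ℂ fun k : ↥(weylK a) =>
    (if ∃ m : ℤ, m < 0 ∧ a i = (m : ℂ) then a i + ((k : Fin N → ℤ) i : ℂ) + 1 else 1) •
      (if h : ((k : Fin N → ℤ) + Pi.single i 1) ∈ weylK a
        then Finsupp.lsingle (⟨_, h⟩ : ↥(weylK a)) else 0)

/-- The action of the generator `p_i` of the Weyl algebra `W_N` on `W(a)`:
`p_i · x(k) = x(k − ε_i)` if `a_i ∈ ℤ_{<0}`, `p_i · x(k) = (a_i + k_i) x(k − ε_i)`
otherwise, with the convention `x(k') = 0` for `k' ∉ K`. -/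
noncomputable def weylP {N : ℕ} (a : Fin N → ℂ) (i : Fin N) : Module.End ℂ (weylW a) :=
  Finsupp.lsum ℂ fun k : ↥(weylK a) =>
    (if ∃ m : ℤ, m < 0 ∧ a i = (m : ℂ) then 1 else a i + ((k : Fin N → ℤ) i : ℂ)) •
      (if h : ((k : Fin N → ℤ) - Pi.single i 1) ∈ weylK a
        then Finsupp.lsingle (⟨_, h⟩ : ↥(weylK a)) else 0)

/-!
The operators `q_i`, `p_i` are restrictions of the operators on `ℂ[ℤ^N]` given by the same
formulas: for `k ∈ K` the coefficient of `q_i · x(k)` (resp. `p_i · x(k)`) vanishes exactly when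
`k + ε_i` (resp. `k - ε_i`) leaves `K`. So `W(a)` embeds equivariantly into `ℂ[ℤ^N]`, where the
Weyl relations reduce to the coefficient identity `q(k) p(k + ε_i) - p(k) q(k - ε_i) = 1`.

Simplicity: `p_i q_i` acts on `x(k)` by `a_i + k_i + 1`, and these eigenvalues separate the basis
vectors, so a nonzero invariant subspace contains some `x(k)`. Since `K` is a product of
intervals of `ℤ`, any two of its points are joined by unit steps inside `K`, each realised up to
a nonzero scalar by some `q_i` or `p_i`; hence the subspace contains every `x(k')`.
-/

theorem LinearMap.comp_lie_eq_of_comp_eq {R M M' : Type*} [CommRing R] [AddCommGroup M]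
    [Module R M] [AddCommGroup M'] [Module R M'] {ι : M →ₗ[R] M'} {f g : Module.End R M}
    {F G : Module.End R M'} (hf : ι ∘ₗ f = F ∘ₗ ι) (hg : ι ∘ₗ g = G ∘ₗ ι) :
    ι ∘ₗ ⁅f, g⁆ = ⁅F, G⁆ ∘ₗ ι := by
  ext v
  have hf' : ∀ x, ι (f x) = F (ι x) := LinearMap.congr_fun hf
  have hg' : ∀ x, ι (g x) = G (ι x) := LinearMap.congr_fun hg
  simp [Ring.lie_def, hf', hg']

theorem Submodule.exists_single_mem_of_diagonal {K σ ι : Type*} [Field K]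
    {p : Submodule K (σ →₀ K)} (hp : p ≠ ⊥) (D : ι → Module.End K (σ →₀ K))
    (hDp : ∀ i, ∀ v ∈ p, D i v ∈ p) (μ : σ → ι → K) (hμ : Function.Injective μ)
    (hD : ∀ i v k, D i v k = μ k i * v k) : ∃ k, Finsupp.single k 1 ∈ p := by
  obtain ⟨v, hv, hv0⟩ := Submodule.exists_mem_ne_zero_of_ne_bot hp
  induction hn : v.support.card using Nat.strong_induction_on generalizing v with
  | _ n ih =>
  obtain ⟨k, hk⟩ := Finsupp.support_nonempty_iff.mpr hv0
  by_cases hsingle : v.support ⊆ {k}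
  · obtain ⟨c, rfl⟩ := Finsupp.support_subset_singleton'.mp hsingle
    have hc : c ≠ 0 := by simpa using hv0
    refine ⟨k, ?_⟩
    simpa [Finsupp.smul_single, hc] using p.smul_mem c⁻¹ hv
  obtain ⟨k', hk', hk'k⟩ := Finset.not_subset.mp hsingle
  rw [Finset.mem_singleton] at hk'k
  obtain ⟨i, hi⟩ := Function.ne_iff.mp (hμ.ne (Ne.symm hk'k))
  set w := D i v - μ k' i • v
  have hw : ∀ l, w l = (μ l i - μ k' i) * v l := fun l => by simp [w, hD, sub_mul]
  have hwk : w k ≠ 0 := by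
    rw [hw]; exact mul_ne_zero (sub_ne_zero.mpr hi) (Finsupp.mem_support_iff.mp hk)
  have hsupp : w.support ⊆ v.support.erase k' := by
    intro l hl
    rw [Finsupp.mem_support_iff, hw] at hl
    rw [Finset.mem_erase, Finsupp.mem_support_iff]
    refine ⟨?_, right_ne_zero_of_mul hl⟩
    rintro rfl
    simp at hl
  refine ih _ ?_ w (p.sub_mem (hDp i v hv) (p.smul_mem _ hv)) (fun h => hwk (by simp [h])) rfl
  calc w.support.card ≤ (v.support.erase k').card := Finset.card_le_card hsupp
    _ < n := hn ▸ Finset.card_erase_lt_of_mem hk'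

theorem sum_natAbs_sub_lt {ι : Type*} [Fintype ι] {k l m : ι → ℤ} {i : ι}
    (hl : ∀ j ≠ i, l j = k j) (hi : (l i - m i).natAbs < (k i - m i).natAbs) :
    ∑ j, (l j - m j).natAbs < ∑ j, (k j - m j).natAbs := by
  refine Finset.sum_lt_sum (fun j _ => ?_) ⟨i, Finset.mem_univ i, hi⟩
  rcases eq_or_ne j i with rfl | hj
  · exact hi.le
  · rw [hl j hj]

namespace WeylModule

variable {N : ℕ} (a : Fin N → ℂ)

noncomputable def qCoeff (i : Fin N) (k : Fin N → ℤ) : ℂ :=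
  if ∃ m : ℤ, m < 0 ∧ a i = (m : ℂ) then a i + (k i : ℂ) + 1 else 1

noncomputable def pCoeff (i : Fin N) (k : Fin N → ℤ) : ℂ :=
  if ∃ m : ℤ, m < 0 ∧ a i = (m : ℂ) then 1 else a i + (k i : ℂ)

variable {a}

theorem qCoeff_congr {i : Fin N} {k k' : Fin N → ℤ} (h : k i = k' i) :
    qCoeff a i k = qCoeff a i k' := by
  simp [qCoeff, h]

theorem pCoeff_congr {i : Fin N} {k k' : Fin N → ℤ} (h : k i = k' i) :
    pCoeff a i k = pCoeff a i k' := by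
  simp [pCoeff, h]

theorem qCoeff_mul_pCoeff_add_single (i : Fin N) (k : Fin N → ℤ) :
    qCoeff a i k * pCoeff a i (k + Pi.single i 1) = a i + k i + 1 := by
  simp only [qCoeff, pCoeff, Pi.add_apply, Pi.single_eq_same]
  split_ifs <;> push_cast <;> ring

theorem pCoeff_mul_qCoeff_sub_single (i : Fin N) (k : Fin N → ℤ) :
    pCoeff a i k * qCoeff a i (k - Pi.single i 1) = a i + k i := by
  simp only [qCoeff, pCoeff, Pi.sub_apply, Pi.single_eq_same]
  split_ifs <;> push_cast <;> ring

theorem add_single_mem_weylK {i : Fin N} {k k' : Fin N → ℤ} (hk : k ∈ weylK a)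
    (hk' : k' ∈ weylK a) (h : k i < k' i) : k + Pi.single i 1 ∈ weylK a := by
  intro j m hm
  have := hk j m hm
  rcases eq_or_ne j i with rfl | hji
  · have := hk' j m hm
    simp only [Pi.add_apply, Pi.single_eq_same]
    omega
  · simpa [Pi.single_eq_of_ne hji]

theorem sub_single_mem_weylK {i : Fin N} {k k' : Fin N → ℤ} (hk : k ∈ weylK a)
    (hk' : k' ∈ weylK a) (h : k' i < k i) : k - Pi.single i 1 ∈ weylK a := by
  intro j m hm
  have := hk j m hm
  rcases eq_or_ne j i with rfl | hji
  · have := hk' j m hm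
    simp only [Pi.sub_apply, Pi.single_eq_same]
    omega
  · simpa [Pi.single_eq_of_ne hji]

theorem add_single_mem_weylK_iff {i : Fin N} {k : Fin N → ℤ} (hk : k ∈ weylK a) (c : ℤ) :
    k + Pi.single i c ∈ weylK a ↔ ∀ m : ℤ, a i = m → (m + (k i + c) < 0 ↔ m < 0) := by
  refine ⟨fun h m hm => by simpa using h i m hm, fun h j m hm => ?_⟩
  rcases eq_or_ne j i with rfl | hji
  · simpa using h m hm
  · simpa [Pi.single_eq_of_ne hji] using hk j m hm

theorem qCoeff_eq_zero_iff {i : Fin N} {k : Fin N → ℤ} (hk : k ∈ weylK a) :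
    qCoeff a i k = 0 ↔ k + Pi.single i 1 ∉ weylK a := by
  rw [add_single_mem_weylK_iff hk, qCoeff]
  split_ifs with hneg
  · obtain ⟨m, hm0, hm⟩ := hneg
    have := hk i m hm
    simp only [hm, Int.cast_inj, forall_eq', not_iff]
    have hcast : (m : ℂ) + k i + 1 = 0 ↔ m + k i + 1 = 0 := by norm_cast
    rw [hcast]
    omega
  · refine iff_of_false one_ne_zero (not_not.mpr fun m hm => ?_)
    have := hk i m hm
    have : ¬ m < 0 := fun hm0 => hneg ⟨m, hm0, hm⟩
    omega

theorem pCoeff_eq_zero_iff {i : Fin N} {k : Fin N → ℤ} (hk : k ∈ weylK a) :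
    pCoeff a i k = 0 ↔ k - Pi.single i 1 ∉ weylK a := by
  rw [sub_eq_add_neg, ← Pi.single_neg, add_single_mem_weylK_iff hk, pCoeff]
  split_ifs with hneg
  · obtain ⟨m, hm0, hm⟩ := hneg
    have := hk i m hm
    simp only [hm, Int.cast_inj, forall_eq', one_ne_zero, false_iff, not_not]
    omega
  · constructor
    · intro h0
      have hm : a i = ((-k i : ℤ) : ℂ) := by push_cast; linear_combination h0
      have : ¬ -k i < 0 := fun hm0 => hneg ⟨-k i, hm0, hm⟩
      simp only [hm, Int.cast_inj, forall_eq', not_iff]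
      omega
    · intro h
      push Not at h
      obtain ⟨m, hm, hmk⟩ := h
      have := hk i m hm
      have : ¬ m < 0 := fun hm0 => hneg ⟨m, hm0, hm⟩
      have hzero : m + k i = 0 := by omega
      rw [hm]
      exact_mod_cast hzero

variable (a)

noncomputable def fullQ (i : Fin N) : Module.End ℂ ((Fin N → ℤ) →₀ ℂ) :=
  Finsupp.lsum ℂ fun k => qCoeff a i k • Finsupp.lsingle (k + Pi.single i 1)

noncomputable def fullP (i : Fin N) : Module.End ℂ ((Fin N → ℤ) →₀ ℂ) :=
  Finsupp.lsum ℂ fun k => pCoeff a i k • Finsupp.lsingle (k - Pi.single i 1)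

noncomputable def incl : weylW a →ₗ[ℂ] (Fin N → ℤ) →₀ ℂ :=
  Finsupp.lmapDomain ℂ ℂ Subtype.val

variable {a}

theorem fullQ_single (i : Fin N) (k : Fin N → ℤ) (c : ℂ) :
    fullQ a i (Finsupp.single k c) = qCoeff a i k • Finsupp.single (k + Pi.single i 1) c := by
  simp [fullQ]

theorem fullP_single (i : Fin N) (k : Fin N → ℤ) (c : ℂ) :
    fullP a i (Finsupp.single k c) = pCoeff a i k • Finsupp.single (k - Pi.single i 1) c := by
  simp [fullP]

theorem incl_injective : Function.Injective (incl a) :=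
  Finsupp.mapDomain_injective Subtype.val_injective

theorem incl_single (k : weylK a) (c : ℂ) :
    incl a (Finsupp.single k c) = Finsupp.single (k : Fin N → ℤ) c := by
  simp [incl]

theorem weylQ_single (i : Fin N) (k : weylK a) (c : ℂ) :
    weylQ a i (Finsupp.single k c) =
      qCoeff a i k • if h : (k : Fin N → ℤ) + Pi.single i 1 ∈ weylK a
        then Finsupp.single ⟨_, h⟩ c else 0 := by
  rw [weylQ, Finsupp.lsum_single]
  split_ifs <;> simp [qCoeff, *]

theorem weylP_single (i : Fin N) (k : weylK a) (c : ℂ) :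
    weylP a i (Finsupp.single k c) =
      pCoeff a i k • if h : (k : Fin N → ℤ) - Pi.single i 1 ∈ weylK a
        then Finsupp.single ⟨_, h⟩ c else 0 := by
  rw [weylP, Finsupp.lsum_single]
  split_ifs <;> simp [pCoeff, *]

theorem incl_comp_weylQ (i : Fin N) : incl a ∘ₗ weylQ a i = fullQ a i ∘ₗ incl a := by
  refine Finsupp.lhom_ext fun k c => ?_
  simp only [LinearMap.comp_apply, weylQ_single, incl_single, fullQ_single]
  split_ifs with h
  · rw [map_smul, incl_single]
  · simp [(qCoeff_eq_zero_iff k.2).mpr h]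

theorem incl_comp_weylP (i : Fin N) : incl a ∘ₗ weylP a i = fullP a i ∘ₗ incl a := by
  refine Finsupp.lhom_ext fun k c => ?_
  simp only [LinearMap.comp_apply, weylP_single, incl_single, fullP_single]
  split_ifs with h
  · rw [map_smul, incl_single]
  · simp [(pCoeff_eq_zero_iff k.2).mpr h]

theorem lie_fullQ_fullQ (i j : Fin N) : ⁅fullQ a i, fullQ a j⁆ = 0 := by
  rcases eq_or_ne i j with rfl | h
  · rw [Ring.lie_def, sub_self]
  refine Finsupp.lhom_ext fun k c => ?_
  simp only [Ring.lie_def, LinearMap.sub_apply, Module.End.mul_apply, fullQ_single, map_smul,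
    smul_smul, LinearMap.zero_apply]
  rw [qCoeff_congr (k := k + Pi.single j 1) (k' := k) (by simp [Pi.single_eq_of_ne h]),
    qCoeff_congr (k := k + Pi.single i 1) (k' := k) (by simp [Pi.single_eq_of_ne h.symm]),
    mul_comm, add_right_comm, sub_self]

theorem lie_fullP_fullP (i j : Fin N) : ⁅fullP a i, fullP a j⁆ = 0 := by
  rcases eq_or_ne i j with rfl | h
  · rw [Ring.lie_def, sub_self]
  refine Finsupp.lhom_ext fun k c => ?_
  simp only [Ring.lie_def, LinearMap.sub_apply, Module.End.mul_apply, fullP_single, map_smul,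
    smul_smul, LinearMap.zero_apply]
  rw [pCoeff_congr (k := k - Pi.single j 1) (k' := k) (by simp [Pi.single_eq_of_ne h]),
    pCoeff_congr (k := k - Pi.single i 1) (k' := k) (by simp [Pi.single_eq_of_ne h.symm]),
    mul_comm, sub_right_comm, sub_self]

theorem lie_fullP_fullQ (i j : Fin N) :
    ⁅fullP a i, fullQ a j⁆ = if i = j then 1 else 0 := by
  refine Finsupp.lhom_ext fun k c => ?_
  simp only [Ring.lie_def, LinearMap.sub_apply, Module.End.mul_apply, fullP_single,
    fullQ_single, map_smul, smul_smul]
  rcases eq_or_ne i j with rfl | h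
  · rw [add_sub_cancel_right, sub_add_cancel, ← sub_smul,
      qCoeff_mul_pCoeff_add_single, pCoeff_mul_qCoeff_sub_single]
    simp
  · rw [pCoeff_congr (k := k + Pi.single j 1) (k' := k) (by simp [Pi.single_eq_of_ne h]),
      qCoeff_congr (k := k - Pi.single i 1) (k' := k) (by simp [Pi.single_eq_of_ne h.symm]),
      add_sub_right_comm, mul_comm, sub_self, if_neg h, LinearMap.zero_apply]

theorem lie_weylQ_weylQ (i j : Fin N) : ⁅weylQ a i, weylQ a j⁆ = 0 := by
  refine (LinearMap.cancel_left incl_injective).mp ?_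
  rw [LinearMap.comp_lie_eq_of_comp_eq (incl_comp_weylQ i) (incl_comp_weylQ j),
    lie_fullQ_fullQ, LinearMap.zero_comp, LinearMap.comp_zero]

theorem lie_weylP_weylP (i j : Fin N) : ⁅weylP a i, weylP a j⁆ = 0 := by
  refine (LinearMap.cancel_left incl_injective).mp ?_
  rw [LinearMap.comp_lie_eq_of_comp_eq (incl_comp_weylP i) (incl_comp_weylP j),
    lie_fullP_fullP, LinearMap.zero_comp, LinearMap.comp_zero]

theorem lie_weylP_weylQ (i j : Fin N) :
    ⁅weylP a i, weylQ a j⁆ = if i = j then 1 else 0 := by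
  refine (LinearMap.cancel_left incl_injective).mp ?_
  rw [LinearMap.comp_lie_eq_of_comp_eq (incl_comp_weylP i) (incl_comp_weylQ j),
    lie_fullP_fullQ]
  split_ifs
  · rfl
  · rw [LinearMap.zero_comp, LinearMap.comp_zero]

theorem weylP_weylQ_single (i : Fin N) (k : weylK a) (c : ℂ) :
    weylP a i (weylQ a i (Finsupp.single k c)) = (a i + k.1 i + 1) • Finsupp.single k c := by
  apply incl_injective
  rw [← LinearMap.comp_apply (f := incl a), incl_comp_weylP, LinearMap.comp_apply,
    ← LinearMap.comp_apply (f := incl a), incl_comp_weylQ, LinearMap.comp_apply, incl_single,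
    fullQ_single, map_smul, fullP_single, add_sub_cancel_right, smul_smul,
    qCoeff_mul_pCoeff_add_single, map_smul, incl_single]

theorem weylP_weylQ_apply (i : Fin N) (v : weylW a) (k : weylK a) :
    weylP a i (weylQ a i v) k = (a i + k.1 i + 1) * v k := by
  induction v using Finsupp.induction_linear with
  | zero => simp
  | add v w hv hw => simp [hv, hw, mul_add]
  | single l c =>
    rw [weylP_weylQ_single, Finsupp.smul_apply, smul_eq_mul, Finsupp.single_apply]
    split_ifs with h
    · rw [h]
    · simp

section Invariant

variable {p : Submodule ℂ (weylW a)}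

theorem single_add_single_mem {i : Fin N} (hp : ∀ v ∈ p, weylQ a i v ∈ p) {k k' : weylK a}
    (hk' : k'.1 = k.1 + Pi.single i 1) (hk : Finsupp.single k 1 ∈ p) :
    Finsupp.single k' 1 ∈ p := by
  have hmem : k.1 + Pi.single i 1 ∈ weylK a := hk' ▸ k'.2
  have hq : weylQ a i (Finsupp.single k 1) = qCoeff a i k • Finsupp.single k' 1 := by
    rw [weylQ_single, dif_pos hmem, show (⟨_, hmem⟩ : weylK a) = k' from Subtype.ext hk'.symm]
  have hne : qCoeff a i k ≠ 0 := fun h => (qCoeff_eq_zero_iff k.2).mp h hmem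
  simpa [hq, smul_smul, hne] using p.smul_mem (qCoeff a i k)⁻¹ (hp _ hk)

theorem single_sub_single_mem {i : Fin N} (hp : ∀ v ∈ p, weylP a i v ∈ p) {k k' : weylK a}
    (hk' : k'.1 = k.1 - Pi.single i 1) (hk : Finsupp.single k 1 ∈ p) :
    Finsupp.single k' 1 ∈ p := by
  have hmem : k.1 - Pi.single i 1 ∈ weylK a := hk' ▸ k'.2
  have hq : weylP a i (Finsupp.single k 1) = pCoeff a i k • Finsupp.single k' 1 := by
    rw [weylP_single, dif_pos hmem, show (⟨_, hmem⟩ : weylK a) = k' from Subtype.ext hk'.symm]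
  have hne : pCoeff a i k ≠ 0 := fun h => (pCoeff_eq_zero_iff k.2).mp h hmem
  simpa [hq, smul_smul, hne] using p.smul_mem (pCoeff a i k)⁻¹ (hp _ hk)

theorem single_mem_of_single_mem (hp : ∀ v ∈ p, ∀ i, weylQ a i v ∈ p ∧ weylP a i v ∈ p)
    {k : weylK a} (hk : Finsupp.single k 1 ∈ p) (k' : weylK a) : Finsupp.single k' 1 ∈ p := by
  induction hn : ∑ j, (k.1 j - k'.1 j).natAbs using Nat.strong_induction_on generalizing k with
  | _ n ih =>
  obtain rfl | hne := eq_or_ne k k'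
  · exact hk
  obtain ⟨i, hi⟩ : ∃ i, k.1 i ≠ k'.1 i := Function.ne_iff.mp (Subtype.coe_ne_coe.mpr hne)
  rcases hi.lt_or_gt with hlt | hgt
  · refine ih _ (hn ▸ sum_natAbs_sub_lt (i := i) (fun j hj => ?_) ?_)
      (k := ⟨_, add_single_mem_weylK k.2 k'.2 hlt⟩)
      (single_add_single_mem (fun v hv => (hp v hv i).1) rfl hk) rfl
    · simp [Pi.single_eq_of_ne hj]
    · simp only [Pi.add_apply, Pi.single_eq_same]
      omega
  · refine ih _ (hn ▸ sum_natAbs_sub_lt (i := i) (fun j hj => ?_) ?_)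
      (k := ⟨_, sub_single_mem_weylK k.2 k'.2 hgt⟩)
      (single_sub_single_mem (fun v hv => (hp v hv i).2) rfl hk) rfl
    · simp [Pi.single_eq_of_ne hj]
    · simp only [Pi.sub_apply, Pi.single_eq_same]
      omega

end Invariant

end WeylModule

/-- Benkart–Britten–Lemire.  For every `a ∈ ℂ^N`, the prescribed
actions of `q_i` and `p_i` on the space `W(a)` with basis `{x(k) : k ∈ K}` make `W(a)` a
well-defined module over the Weyl algebra `W_N` (the operators satisfy the Weyl relations
`[q_i,q_j] = 0 = [p_i,p_j]`, `[p_i,q_j] = δ_{ij}`, the bracket on `Module.End` being the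
commutator), and this module is nonzero and simple: every subspace invariant under all
the `q_i` and `p_i` is `⊥` or `⊤`. -/
theorem stmt_9 (N : ℕ) (a : Fin N → ℂ) :
    (∀ i j : Fin N, ⁅weylQ a i, weylQ a j⁆ = 0) ∧
    (∀ i j : Fin N, ⁅weylP a i, weylP a j⁆ = 0) ∧
    (∀ i j : Fin N, ⁅weylP a i, weylQ a j⁆ = if i = j then 1 else 0) ∧
    Nontrivial (weylW a) ∧
    (∀ p : Submodule ℂ (weylW a),
      (∀ v ∈ p, ∀ i : Fin N, weylQ a i v ∈ p ∧ weylP a i v ∈ p) → p = ⊥ ∨ p = ⊤) := by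
  refine ⟨WeylModule.lie_weylQ_weylQ, WeylModule.lie_weylP_weylP, WeylModule.lie_weylP_weylQ,
    ?_, fun p hp => ?_⟩
  · have : Nonempty (weylK a) := ⟨⟨0, fun i m _ => by simp⟩⟩
    infer_instance
  rcases eq_or_ne p ⊥ with hbot | hbot
  · exact .inl hbot
  have hμ : Function.Injective fun (k : weylK a) i => a i + k.1 i + 1 := fun k k' h =>
    Subtype.ext <| funext fun i => by simpa using congr_fun h i
  obtain ⟨k, hk⟩ := p.exists_single_mem_of_diagonal hbot (fun i => weylP a i ∘ₗ weylQ a i)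
    (fun i v hv => (hp _ (hp v hv i).1 i).2) _ hμ WeylModule.weylP_weylQ_apply
  refine .inr (eq_top_iff.mpr ?_)
  rw [← Finsupp.basisSingleOne.span_eq, Submodule.span_le]
  rintro _ ⟨k', rfl⟩
  simpa using WeylModule.single_mem_of_single_mem hp hk k'
end

section
/- Let M be a simple cuspidal weight module over a reductive complex Lie algebra g, meaning every nonzero root vector acts injectively on M. Then every nonzero root vector acts bijectively on M, and all weight spaces of M in its support have the same (finite) dimension. -/
/-! A root vector `X ∈ g_β` maps `M_ψ` injectively into `M_{ψ+β}`, so `dim M_ψ ≤ dim M_{ψ+q}` for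
every `q` in the monoid `Q⁺` generated by the roots. By simplicity, the generalized weight spaces
with weights in `χ + Q⁺` span all of `M` whenever `M_χ ≠ 0`; since weight spaces are independent,
any two weights of the support differ by elements of `Q⁺` in both directions, and their dimensions
agree. Applied to `χ` and `χ + α` this also gives `-α ∈ Q⁺`, hence `dim M_{χ-α} ≥ dim M_χ`, and the
injective map `X : M_{χ-α} → M_χ` is onto. -/

open LieModule LieAlgebra

section

variable {g : Type*} [LieRing g] [LieAlgebra ℂ g] {H : LieSubalgebra ℂ g}
  {M : Type*} [AddCommGroup M] [Module ℂ M] [LieRingModule g M] [LieModule ℂ g M]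

section WeightSpaces

lemma wtSpace_le_genWeightSpace [LieRing.IsNilpotent H] (χ : H → ℂ) :
    wtSpace H M χ ≤ (genWeightSpace M χ : Submodule ℂ M) := fun v hv ↦
  weightSpace_le_genWeightSpace (M := M) χ <| (mem_weightSpace χ v).mpr hv

lemma lie_mem_wtSpace_add {β ψ : H → ℂ} {X : g} (hX : X ∈ wtSpace H g β)
    {m : M} (hm : m ∈ wtSpace H M ψ) : ⁅X, m⁆ ∈ wtSpace H M (ψ + β) := by
  intro x
  rw [leibniz_lie, hX x, hm x, smul_lie, lie_smul, Pi.add_apply, add_smul]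
  abel

def wtSpaceShift {β : H → ℂ} {X : g} (hX : X ∈ wtSpace H g β) (ψ : H → ℂ) :
    wtSpace H M ψ →ₗ[ℂ] wtSpace H M (ψ + β) :=
  (toEnd ℂ g M X).restrict fun _ hm ↦ lie_mem_wtSpace_add hX hm

variable {β : H → ℂ} {X : g} (hX : X ∈ wtSpace H g β)
  (hinj : Function.Injective fun m : M ↦ ⁅X, m⁆) (ψ : H → ℂ)
include hX hinj

lemma injective_wtSpaceShift : Function.Injective (wtSpaceShift (M := M) hX ψ) :=
  fun _ _ h ↦ Subtype.ext <| hinj <| congrArg Subtype.val h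

lemma finrank_wtSpace_le_add [FiniteDimensional ℂ (wtSpace H M (ψ + β))] :
    Module.finrank ℂ (wtSpace H M ψ) ≤ Module.finrank ℂ (wtSpace H M (ψ + β)) :=
  LinearMap.finrank_le_finrank_of_injective (injective_wtSpaceShift hX hinj ψ)

lemma wtSpace_add_le_range [FiniteDimensional ℂ (wtSpace H M ψ)]
    [FiniteDimensional ℂ (wtSpace H M (ψ + β))]
    (hle : Module.finrank ℂ (wtSpace H M (ψ + β)) ≤ Module.finrank ℂ (wtSpace H M ψ)) :
    wtSpace H M (ψ + β) ≤ LinearMap.range (toEnd ℂ g M X) := by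
  intro w hw
  have hbij := (LinearMap.injective_iff_surjective_of_finrank_eq_finrank
    (le_antisymm (finrank_wtSpace_le_add hX hinj ψ) hle)).mp (injective_wtSpaceShift hX hinj ψ)
  obtain ⟨m, hm⟩ := hbij ⟨w, hw⟩
  exact ⟨m, congrArg Subtype.val hm⟩

end WeightSpaces

section Roots

variable [LieRing.IsNilpotent H]

variable (H) in
def rootMonoid : AddSubmonoid (H → ℂ) :=
  AddSubmonoid.closure {β | β ≠ 0 ∧ rootSpace H β ≠ ⊥}

lemma mem_rootMonoid_of_rootSpace_ne_bot {β : H → ℂ} (h : rootSpace H β ≠ ⊥) :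
    β ∈ rootMonoid H := by
  rcases eq_or_ne β 0 with rfl | hβ
  · exact zero_mem _
  · exact AddSubmonoid.subset_closure ⟨hβ, h⟩

lemma rootSpace_ne_bot_of_mem_wtSpace {β : H → ℂ} {X : g} (hX : X ∈ wtSpace H g β)
    (hX0 : X ≠ 0) : rootSpace H β ≠ ⊥ := by
  intro h
  have hX' : X ∈ rootSpace H β := wtSpace_le_genWeightSpace β hX
  rw [h, LieSubmodule.mem_bot] at hX'
  exact hX0 hX'

lemma exists_ne_zero_mem_wtSpace [FiniteDimensional ℂ g] {β : H → ℂ}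
    (h : rootSpace H β ≠ ⊥) : ∃ X ∈ wtSpace H g β, X ≠ 0 := by
  obtain ⟨X, hX0, hX⟩ := exists_forall_lie_eq_smul ℂ H g ⟨β, h⟩
  exact ⟨X, fun x ↦ hX x, hX0⟩

end Roots

section Cuspidal

variable [LieRing.IsNilpotent H] [FiniteDimensional ℂ g]
  (hfd : ∀ χ : H → ℂ, FiniteDimensional ℂ (wtSpace H M χ))
  (hcusp : ∀ α : H → ℂ, α ≠ 0 → ∀ X ∈ wtSpace H g α, X ≠ 0 →
    Function.Injective fun m : M ↦ ⁅X, m⁆)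
include hfd hcusp

lemma finrank_wtSpace_le_add_of_mem_rootMonoid {q : H → ℂ} (hq : q ∈ rootMonoid H)
    (ψ : H → ℂ) :
    Module.finrank ℂ (wtSpace H M ψ) ≤ Module.finrank ℂ (wtSpace H M (ψ + q)) := by
  induction hq using AddSubmonoid.closure_induction generalizing ψ with
  | mem β hβ =>
    obtain ⟨X, hX, hX0⟩ := exists_ne_zero_mem_wtSpace hβ.2
    exact finrank_wtSpace_le_add hX (hcusp β hβ.1 X hX hX0) ψ
  | zero => rw [add_zero]
  | add a b _ _ iha ihb => exact (iha ψ).trans <| (ihb (ψ + a)).trans_eq <| by rw [add_assoc]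

end Cuspidal

section Simple

variable [LieRing.IsNilpotent H]

lemma exists_eq_of_mem_genWeightSpace_of_mem_iSup {ι : Type*} (f : ι → H → ℂ) {χ : H → ℂ}
    {v : M} (hv : v ∈ genWeightSpace M χ) (hv0 : v ≠ 0)
    (hmem : v ∈ ⨆ i, genWeightSpace M (f i)) : ∃ i, f i = χ := by
  by_contra! hne
  have hle : ⨆ i, genWeightSpace M (f i) ≤ ⨆ ψ, ⨆ (_ : ψ ≠ χ), genWeightSpace M ψ :=
    iSup_le fun i ↦ le_iSup₂_of_le (f i) (hne i) le_rfl
  exact hv0 <| (LieSubmodule.mem_bot v).mp <|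
    (iSupIndep_genWeightSpace ℂ H M χ).le_bot ⟨hv, hle hmem⟩

variable [FiniteDimensional ℂ g]

omit [LieModule ℂ g M] in
lemma lie_mem_of_forall_rootSpace {N : Submodule ℂ M}
    (h : ∀ β : H → ℂ, ∀ x ∈ rootSpace H β, ∀ m ∈ N, ⁅x, m⁆ ∈ N) (x : g) {m : M}
    (hm : m ∈ N) : ⁅x, m⁆ ∈ N := by
  have hx : x ∈ ⨆ β : H → ℂ, rootSpace H β := by
    rw [iSup_genWeightSpace_eq_top]
    exact LieSubmodule.mem_top x
  induction hx using LieSubmodule.iSup_induction' with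
  | mem β x hx => exact h β x hx m hm
  | zero => rw [zero_lie]; exact N.zero_mem
  | add x y _ _ hx hy => rw [add_lie]; exact N.add_mem hx hy

lemma lie_mem_iSup_genWeightSpace_add (χ : H → ℂ) (x : g) {m : M}
    (hm : m ∈ ⨆ q : rootMonoid H, genWeightSpace M (χ + (q : H → ℂ))) :
    ⁅x, m⁆ ∈ ⨆ q : rootMonoid H, genWeightSpace M (χ + (q : H → ℂ)) := by
  refine lie_mem_of_forall_rootSpace (H := H)
    (N := (⨆ q : rootMonoid H, genWeightSpace M (χ + (q : H → ℂ))).toSubmodule)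
    (fun β x hx m hm ↦ ?_) x hm
  rcases eq_or_ne (rootSpace H β) ⊥ with hβ | hβ
  · rw [hβ, LieSubmodule.mem_bot] at hx
    rw [hx, zero_lie]
    exact zero_mem _
  induction hm using LieSubmodule.iSup_induction' with
  | mem q m hm =>
    refine LieSubmodule.mem_iSup_of_mem
      ⟨q + β, add_mem q.2 (mem_rootMonoid_of_rootSpace_ne_bot hβ)⟩ ?_
    simpa [add_comm, add_left_comm] using lie_mem_genWeightSpace_of_mem_genWeightSpace hx hm
  | zero => rw [lie_zero]; exact zero_mem _
  | add m n _ _ hm hn => rw [lie_add]; exact add_mem hm hn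

variable (M) in
def genWeightSpaceCone (χ : H → ℂ) : LieSubmodule ℂ g M where
  toSubmodule := (⨆ q : rootMonoid H, genWeightSpace M (χ + (q : H → ℂ))).toSubmodule
  lie_mem := lie_mem_iSup_genWeightSpace_add χ _

lemma exists_mem_rootMonoid_add_eq (hsimple : ∀ q : LieSubmodule ℂ g M, q = ⊥ ∨ q = ⊤)
    {χ₁ χ₂ : H → ℂ} (h₁ : wtSpace H M χ₁ ≠ ⊥) (h₂ : wtSpace H M χ₂ ≠ ⊥) :
    ∃ q ∈ rootMonoid H, χ₁ + q = χ₂ := by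
  have hcone : genWeightSpaceCone M χ₁ = ⊤ := by
    refine (hsimple _).resolve_left fun hbot ↦ h₁ <| eq_bot_iff.mpr fun v hv ↦ ?_
    have hv' : v ∈ genWeightSpaceCone M χ₁ :=
      LieSubmodule.mem_iSup_of_mem (0 : rootMonoid H) <| by
        simpa using wtSpace_le_genWeightSpace χ₁ hv
    rwa [hbot] at hv'
  obtain ⟨v, hv, hv0⟩ := Submodule.exists_mem_ne_zero_of_ne_bot h₂
  have hv_cone : v ∈ genWeightSpaceCone M χ₁ := hcone ▸ LieSubmodule.mem_top v
  obtain ⟨⟨q, hq⟩, hq_eq⟩ := exists_eq_of_mem_genWeightSpace_of_mem_iSup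
    (fun q : rootMonoid H ↦ χ₁ + (q : H → ℂ)) (wtSpace_le_genWeightSpace χ₂ hv) hv0 hv_cone
  exact ⟨q, hq, hq_eq⟩

end Simple

section SimpleCuspidal

variable [LieRing.IsNilpotent H] [FiniteDimensional ℂ g]
  (hsimple : ∀ q : LieSubmodule ℂ g M, q = ⊥ ∨ q = ⊤)
  (hfd : ∀ χ : H → ℂ, FiniteDimensional ℂ (wtSpace H M χ))
  (hcusp : ∀ α : H → ℂ, α ≠ 0 → ∀ X ∈ wtSpace H g α, X ≠ 0 →
    Function.Injective fun m : M ↦ ⁅X, m⁆)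
include hsimple hfd hcusp

lemma finrank_wtSpace_eq {χ₁ χ₂ : H → ℂ} (h₁ : wtSpace H M χ₁ ≠ ⊥)
    (h₂ : wtSpace H M χ₂ ≠ ⊥) :
    Module.finrank ℂ (wtSpace H M χ₁) = Module.finrank ℂ (wtSpace H M χ₂) := by
  obtain ⟨q, hq, hq_eq⟩ := exists_mem_rootMonoid_add_eq hsimple h₁ h₂
  obtain ⟨q', hq', hq'_eq⟩ := exists_mem_rootMonoid_add_eq hsimple h₂ h₁
  exact le_antisymm (hq_eq ▸ finrank_wtSpace_le_add_of_mem_rootMonoid hfd hcusp hq χ₁)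
    (hq'_eq ▸ finrank_wtSpace_le_add_of_mem_rootMonoid hfd hcusp hq' χ₂)

lemma neg_mem_rootMonoid {α : H → ℂ} (hα : α ∈ rootMonoid H) {χ : H → ℂ}
    (hχ : wtSpace H M χ ≠ ⊥) : -α ∈ rootMonoid H := by
  have hχα : wtSpace H M (χ + α) ≠ ⊥ := by
    have := hfd
    rw [← Submodule.one_le_finrank_iff] at hχ ⊢
    exact hχ.trans (finrank_wtSpace_le_add_of_mem_rootMonoid hfd hcusp hα χ)
  obtain ⟨q, hq, hq_eq⟩ := exists_mem_rootMonoid_add_eq hsimple hχα hχ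
  rw [add_assoc, add_eq_left, add_eq_zero_iff_eq_neg'] at hq_eq
  exact hq_eq ▸ hq

lemma wtSpace_le_range_toEnd {α : H → ℂ} (hα : α ≠ 0) {X : g} (hX : X ∈ wtSpace H g α)
    (hX0 : X ≠ 0) (χ : H → ℂ) : wtSpace H M χ ≤ LinearMap.range (toEnd ℂ g M X) := by
  rcases eq_or_ne (wtSpace H M χ) ⊥ with hχ | hχ
  · exact hχ ▸ bot_le
  have := hfd
  have hneg := neg_mem_rootMonoid hsimple hfd hcusp
    (mem_rootMonoid_of_rootSpace_ne_bot (rootSpace_ne_bot_of_mem_wtSpace hX hX0)) hχ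
  have hle : Module.finrank ℂ (wtSpace H M (χ - α + α)) ≤
      Module.finrank ℂ (wtSpace H M (χ - α)) := by
    rw [sub_add_cancel, sub_eq_add_neg]
    exact finrank_wtSpace_le_add_of_mem_rootMonoid hfd hcusp hneg χ
  simpa only [sub_add_cancel] using wtSpace_add_le_range hX (hcusp α hα X hX hX0) (χ - α) hle

end SimpleCuspidal

end

theorem stmt_15_general
    (g : Type*) [LieRing g] [LieAlgebra ℂ g] [FiniteDimensional ℂ g]
    (H : LieSubalgebra ℂ g) [H.IsCartanSubalgebra]
    (M : Type*) [AddCommGroup M] [Module ℂ M] [LieRingModule g M] [LieModule ℂ g M]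
    -- `M` is a weight module
    (hdiag : (⨆ χ : H → ℂ, wtSpace H M χ) = ⊤)
    (hfd : ∀ χ : H → ℂ, FiniteDimensional ℂ (wtSpace H M χ))
    -- `M` is simple
    (hsimple : ∀ q : LieSubmodule ℂ g M, q = ⊥ ∨ q = ⊤)
    -- `M` is cuspidal: every nonzero root vector acts injectively
    (hcusp : ∀ α : H → ℂ, α ≠ 0 → ∀ X ∈ wtSpace H g α, X ≠ 0 →
      Function.Injective fun m : M => ⁅X, m⁆) :
    -- every nonzero root vector acts bijectively ...
    (∀ α : H → ℂ, α ≠ 0 → ∀ X ∈ wtSpace H g α, X ≠ 0 →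
      Function.Bijective fun m : M => ⁅X, m⁆) ∧
    -- ... and all weight spaces in the support have the same dimension
    ∀ χ₁ χ₂ : H → ℂ, wtSpace H M χ₁ ≠ ⊥ → wtSpace H M χ₂ ≠ ⊥ →
      Module.finrank ℂ (wtSpace H M χ₁) = Module.finrank ℂ (wtSpace H M χ₂) := by
  refine ⟨fun α hα X hX hX0 ↦ ⟨hcusp α hα X hX hX0, ?_⟩,
    fun _ _ ↦ finrank_wtSpace_eq hsimple hfd hcusp⟩
  have hrange : LinearMap.range (toEnd ℂ g M X) = ⊤ :=
    top_le_iff.mp <| hdiag ▸ iSup_le (wtSpace_le_range_toEnd hsimple hfd hcusp hα hX hX0)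
  exact LinearMap.range_eq_top.mp hrange

/-- Let `g` be a finite-dimensional reductive complex Lie algebra with
Cartan subalgebra `H` and let `M` be a simple cuspidal weight `g`-module: `M` is
`H`-diagonalizable with finite-dimensional weight spaces, has no nontrivial Lie
submodule, and every nonzero root vector (a nonzero `X ∈ g_α` for a root `α`) acts
injectively on `M`.  Then every nonzero root vector acts *bijectively* on `M`, and all
weight spaces in the support of `M` have the same (finite) dimension. -/
theorem stmt_15
    (g : Type*) [LieRing g] [LieAlgebra ℂ g] [FiniteDimensional ℂ g]
    (hred : LieAlgebra.radical ℂ g = LieAlgebra.center ℂ g)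
    (H : LieSubalgebra ℂ g) [H.IsCartanSubalgebra]
    (M : Type*) [AddCommGroup M] [Module ℂ M] [LieRingModule g M] [LieModule ℂ g M]
    [Nontrivial M]
    -- `M` is a weight module
    (hdiag : (⨆ χ : H → ℂ, wtSpace H M χ) = ⊤)
    (hfd : ∀ χ : H → ℂ, FiniteDimensional ℂ (wtSpace H M χ))
    -- `M` is simple
    (hsimple : ∀ q : LieSubmodule ℂ g M, q = ⊥ ∨ q = ⊤)
    -- `M` is cuspidal: every nonzero root vector acts injectively
    (hcusp : ∀ α : H → ℂ, α ≠ 0 → ∀ X ∈ wtSpace H g α, X ≠ 0 →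
      Function.Injective fun m : M => ⁅X, m⁆) :
    -- every nonzero root vector acts bijectively ...
    (∀ α : H → ℂ, α ≠ 0 → ∀ X ∈ wtSpace H g α, X ≠ 0 →
      Function.Bijective fun m : M => ⁅X, m⁆) ∧
    -- ... and all weight spaces in the support have the same dimension
    ∀ χ₁ χ₂ : H → ℂ, wtSpace H M χ₁ ≠ ⊥ → wtSpace H M χ₂ ≠ ⊥ →
      Module.finrank ℂ (wtSpace H M χ₁) = Module.finrank ℂ (wtSpace H M χ₂) :=
  stmt_15_general g H M hdiag hfd hsimple hcusp
end

section
/- Let g = sl(n+1,ℂ) of type A_n realized in the Weyl algebra W_{n+1} via E_{i,j} ↦ q_i p_j, and let a ∈ ℂ^{n+1} with all a_i ∉ ℤ. Then the subspace N(a) of W(a) spanned by the x(k) with k ∈ ℤ^{n+1}, Σk_i = 0, is a g-submodule of W(a), and every nonzero root vector of g acts injectively on N(a) (i.e., N(a) is cuspidal). -/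
/-- The action of the elementary matrix `E_{i,j}` of `gl(n+1, ℂ)` on the simple Weyl
module `W(a)` in the generic case (all `a_i ∉ ℤ`, so the index set `K` is all of
`ℤ^{n+1}`), through the embedding `E_{i,j} ↦ q_i p_j` into the Weyl algebra:
`E_{i,j} · x(k) = (a_j + k_j) x(k + ε_i − ε_j)` for `i ≠ j`, and
`E_{i,i} · x(k) = (a_i + k_i) x(k)`.  Here `x(k) := Finsupp.single k 1`. -/
noncomputable def slAop {n : ℕ} (a : Fin (n + 1) → ℂ) (i j : Fin (n + 1)) :
    Module.End ℂ ((Fin (n + 1) → ℤ) →₀ ℂ) :=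
  Finsupp.lsum ℂ fun k : Fin (n + 1) → ℤ =>
    (a j + (k j : ℂ)) • Finsupp.lsingle (k + Pi.single i 1 - Pi.single j 1)

lemma slAop_apply {n : ℕ} (a : Fin (n + 1) → ℂ) (i j : Fin (n + 1))
    (f : (Fin (n + 1) → ℤ) →₀ ℂ) (m : Fin (n + 1) → ℤ) :
    slAop a i j f m =
      (a j + (((m - Pi.single i 1 + Pi.single j 1 : Fin (n + 1) → ℤ) j : ℤ) : ℂ)) *
        f (m - Pi.single i 1 + Pi.single j 1) := by
  classical
  rw [slAop, Finsupp.lsum_apply, Finsupp.sum_apply, Finsupp.sum]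
  have key : ∀ k : Fin (n + 1) → ℤ,
      (((a j + (k j : ℂ)) • Finsupp.lsingle (R := ℂ) (k + Pi.single i 1 - Pi.single j 1)) (f k)) m
        = if k = m - Pi.single i 1 + Pi.single j 1 then
            (a j + (k j : ℂ)) * f k else 0 := by
    intro k
    have h : (k + Pi.single i 1 - Pi.single j 1 = m) ↔ (k = m - Pi.single i 1 + Pi.single j 1) := by
      constructor <;> intro h <;> · subst h; abel
    simp only [LinearMap.smul_apply, Finsupp.lsingle_apply, Finsupp.smul_single, Finsupp.single_apply, h,
      smul_eq_mul]
  rw [Finset.sum_congr rfl fun k _ => key k]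
  rw [Finset.sum_ite_eq' f.support]
  split_ifs with h
  · rfl
  · rw [Finsupp.notMem_support_iff.mp h, mul_zero]

/-- The subspace `N(a)` of `W(a)` spanned by the basis vectors `x(k)` with
`∑ i, k i = 0`. -/
noncomputable def slAsub (n : ℕ) : Submodule ℂ ((Fin (n + 1) → ℤ) →₀ ℂ) :=
  Finsupp.supported ℂ ℂ {k : Fin (n + 1) → ℤ | ∑ i, k i = 0}

/-- Let `g = sl(n+1, ℂ)` act on the Weyl module `W(a)` through the
embedding `E_{i,j} ↦ q_i p_j` into the Weyl algebra `W_{n+1}`, where `a ∈ ℂ^{n+1}` with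
all `a_i ∉ ℤ`.  Then the subspace `N(a)` of `W(a)` spanned by the `x(k)` with
`∑ k_i = 0` is a `g`-submodule of `W(a)` (it is stable under every `E_{i,j}`, and hence
under every trace-zero combination of them), and every nonzero root vector of `g` — a
nonzero multiple of some `E_{i,j}` with `i ≠ j` — acts injectively on `N(a)`; i.e.
`N(a)` is cuspidal. -/
theorem stmt_19 (n : ℕ) (a : Fin (n + 1) → ℂ)
    (ha : ∀ i : Fin (n + 1), ∀ m : ℤ, a i ≠ (m : ℂ)) :
    -- `N(a)` is stable under the action of `g`
    (∀ i j : Fin (n + 1), ∀ f ∈ slAsub n, slAop a i j f ∈ slAsub n) ∧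
    -- every root vector `E_{i,j}`, `i ≠ j`, acts injectively on `N(a)`
    (∀ i j : Fin (n + 1), i ≠ j →
      ∀ f ∈ slAsub n, slAop a i j f = 0 → f = 0) := by
  constructor
  · intro i j f hf
    rw [slAsub, Finsupp.mem_supported'] at hf ⊢
    intro m hm
    rw [slAop_apply]
    rw [hf _ ?_, mul_zero]
    simp only [Set.mem_setOf_eq, Pi.add_apply, Pi.sub_apply] at hm ⊢
    rw [Finset.sum_add_distrib, Finset.sum_sub_distrib]
    have h1 : ∑ x, Pi.single i (1:ℤ) x = 1 := by simp [Pi.single_apply]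
    have h2 : ∑ x, Pi.single j (1:ℤ) x = 1 := by simp [Pi.single_apply]
    rw [h1, h2]
    simpa using hm
  · intro i j _ f _ h0
    ext m
    have := congrArg (fun g : (Fin (n + 1) → ℤ) →₀ ℂ =>
      g (m + Pi.single i 1 - Pi.single j 1)) h0
    simp only [Finsupp.coe_zero, Pi.zero_apply] at this
    rw [slAop_apply] at this
    have hτ : m + Pi.single i 1 - Pi.single j 1 - Pi.single i 1 + Pi.single j 1 = m := by
      abel
    rw [hτ] at this
    have hne : a j + ((m j : ℤ) : ℂ) ≠ 0 := by
      intro h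
      exact ha j (-(m j)) (by push_cast; linear_combination h)
    simpa [hne] using this
end
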